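/- arXiv:1507.02190 — 7 statements merged into one kernel-verified Lean document; each statement's English description precedes it below -/
import Mathlib

section
/- Let L be a Latin square of order n and let g be an automorphism of L which does not fix each of the three parts R, C, E setwise (i.e. g induces a non-identity permutation of the three parts). Then g fixes at most n cells of L. -/
/-- A Latin square of order `n`: every row and every column is a bijection. -/
def IsLatinSquare (n : ℕ) (L : Fin n → Fin n → Fin n) : Prop :=
  (∀ i, Function.Bijective (L i)) ∧ (∀ j, Function.Bijective (fun i => L i j))

/-- The part (row/column/entry) of an element of the disjoint union `R ⊕ C ⊕ E`. -/
def latinPart (n : ℕ) : (Fin n ⊕ Fin n ⊕ Fin n) → Fin 3 :=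
  Sum.elim (fun _ => 0) (Sum.elim (fun _ => 1) (fun _ => 2))

/-- The cells of a Latin square `L`, viewed as 3-element subsets of `R ⊕ C ⊕ E`. -/
def latinCells (n : ℕ) (L : Fin n → Fin n → Fin n) :
    Set (Set (Fin n ⊕ Fin n ⊕ Fin n)) :=
  {s | ∃ i j, s = {Sum.inl i, Sum.inr (Sum.inl j), Sum.inr (Sum.inr (L i j))}}

/-- `g` is an automorphism of the Latin square `L`: it preserves the partition
into the three parts `R, C, E` (possibly permuting the parts), and it maps the
set of cells of `L` onto itself. -/
def IsLatinAuto (n : ℕ) (L : Fin n → Fin n → Fin n)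
    (g : Equiv.Perm (Fin n ⊕ Fin n ⊕ Fin n)) : Prop :=
  (∃ σ : Equiv.Perm (Fin 3), ∀ x, latinPart n (g x) = σ (latinPart n x)) ∧
  (fun s => ⇑g '' s) '' latinCells n L = latinCells n L

/-- The element of part `p` with index `k`. -/
def latinCoord (n : ℕ) (p : Fin 3) (k : Fin n) : Fin n ⊕ Fin n ⊕ Fin n :=
  if p = 0 then Sum.inl k else if p = 1 then Sum.inr (Sum.inl k) else Sum.inr (Sum.inr k)

lemma latinPart_coord (n : ℕ) (p : Fin 3) (k : Fin n) :
    latinPart n (latinCoord n p k) = p := by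
  fin_cases p <;> rfl

/-- Two cells sharing two elements of distinct parts are equal. -/
lemma latin_cells_eq {n : ℕ} {L : Fin n → Fin n → Fin n} (hL : IsLatinSquare n L)
    {s t : Set (Fin n ⊕ Fin n ⊕ Fin n)} (hs : s ∈ latinCells n L) (ht : t ∈ latinCells n L)
    {x y : Fin n ⊕ Fin n ⊕ Fin n} (hxs : x ∈ s) (hxt : x ∈ t)
    (hys : y ∈ s) (hyt : y ∈ t) (hxy : latinPart n x ≠ latinPart n y) : s = t := by
  obtain ⟨i, j, rfl⟩ := hs
  obtain ⟨i', j', rfl⟩ := ht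
  rcases x with a | b | c <;> rcases y with a' | b' | c' <;>
    simp only [latinPart, Sum.elim_inl, Sum.elim_inr, ne_eq, Set.mem_insert_iff,
      Set.mem_singleton_iff, Sum.inl.injEq, Sum.inr.injEq, reduceCtorEq, or_false,
      false_or] at hxy hxs hxt hys hyt
  · exact (hxy trivial).elim
  · obtain rfl : i = i' := hxs.symm.trans hxt
    obtain rfl : j = j' := hys.symm.trans hyt
    rfl
  · obtain rfl : i = i' := hxs.symm.trans hxt
    obtain rfl : j = j' := (hL.1 i).1 (hys.symm.trans hyt)
    rfl
  · obtain rfl : i = i' := hys.symm.trans hyt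
    obtain rfl : j = j' := hxs.symm.trans hxt
    rfl
  · exact (hxy trivial).elim
  · obtain rfl : j = j' := hxs.symm.trans hxt
    obtain rfl : i = i' := (hL.2 j).1 (hys.symm.trans hyt)
    rfl
  · obtain rfl : i = i' := hys.symm.trans hyt
    obtain rfl : j = j' := (hL.1 i).1 (hxs.symm.trans hxt)
    rfl
  · obtain rfl : j = j' := hys.symm.trans hyt
    obtain rfl : i = i' := (hL.2 j).1 (hxs.symm.trans hxt)
    rfl
  · exact (hxy trivial).elim

/-- If `g` is an automorphism of a Latin square `L` of order `n` which does not
fix each of the three parts `R, C, E` setwise, then `g` fixes at most `n` cells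
of `L`. -/
theorem latin_auto_moving_parts_fixes_few_cells (n : ℕ)
    (L : Fin n → Fin n → Fin n) (hL : IsLatinSquare n L)
    (g : Equiv.Perm (Fin n ⊕ Fin n ⊕ Fin n)) (hg : IsLatinAuto n L g)
    (hparts : ¬ ∀ x, latinPart n (g x) = latinPart n x) :
    Set.ncard {s ∈ latinCells n L | ⇑g '' s = s} ≤ n := by
  classical
  obtain ⟨⟨σ, hσ⟩, _⟩ := hg
  push_neg at hparts
  obtain ⟨x0, hx0⟩ := hparts
  have hn : 0 < n := by
    rcases x0 with a | b | c
    · exact a.pos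
    · exact b.pos
    · exact c.pos
  haveI : Nonempty (Fin n) := ⟨⟨0, hn⟩⟩
  have hσne : σ (latinPart n x0) ≠ latinPart n x0 := by rw [← hσ]; exact hx0
  have hcase : σ 0 ≠ 0 ∨ σ 1 ≠ 1 := by
    by_contra h
    push_neg at h
    obtain ⟨h0, h1⟩ := h
    have h2 : σ 2 = 2 := by
      have n0 : σ 2 ≠ 0 := fun hc => by
        have := σ.injective (hc.trans h0.symm); exact absurd this (by decide)
      have n1 : σ 2 ≠ 1 := fun hc => by
        have := σ.injective (hc.trans h1.symm); exact absurd this (by decide)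
      omega
    apply hσne
    have hall : ∀ p : Fin 3, σ p = p := by intro p; fin_cases p <;> assumption
    exact hall _
  set S := {s ∈ latinCells n L | ⇑g '' s = s} with hS
  have key : ∀ (extract : Set (Fin n ⊕ Fin n ⊕ Fin n) → Fin n)
      (p : Fin 3), σ p ≠ p →
      (∀ s ∈ S, latinCoord n p (extract s) ∈ s) → S.ncard ≤ n := by
    intro extract p hp hext
    have hinj : Set.InjOn extract S := by
      intro s hs t ht hst
      have hzs : latinCoord n p (extract s) ∈ s := hext s hs
      have hzt : latinCoord n p (extract s) ∈ t := by
        rw [hst]; exact hext t ht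
      have hgzs : g (latinCoord n p (extract s)) ∈ s := by
        have h2 := Set.mem_image_of_mem (⇑g) hzs
        rwa [hs.2] at h2
      have hgzt : g (latinCoord n p (extract s)) ∈ t := by
        have h2 := Set.mem_image_of_mem (⇑g) hzt
        rwa [ht.2] at h2
      have hne : latinPart n (latinCoord n p (extract s)) ≠
          latinPart n (g (latinCoord n p (extract s))) := by
        rw [hσ, latinPart_coord]
        exact fun h => hp h.symm
      exact latin_cells_eq hL hs.1 ht.1 hzs hzt hgzs hgzt hne
    calc S.ncard ≤ (Set.univ : Set (Fin n)).ncard :=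
          Set.ncard_le_ncard_of_injOn extract (fun a _ => Set.mem_univ _) hinj
            Set.finite_univ
      _ = n := by simp [Set.ncard_univ]
  rcases hcase with h0 | h1
  · apply key (fun s => if h : ∃ i, Sum.inl i ∈ s then h.choose else Classical.arbitrary _) 0 h0
    intro s hs
    have h : ∃ i, Sum.inl i ∈ s := by
      obtain ⟨i, j, rfl⟩ := hs.1
      exact ⟨i, by simp⟩
    simp only [latinCoord, if_pos rfl]
    rw [dif_pos h]
    exact h.choose_spec
  · apply key (fun s => if h : ∃ j, Sum.inr (Sum.inl j) ∈ s then h.choose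
      else Classical.arbitrary _) 1 h1
    intro s hs
    have h : ∃ j, Sum.inr (Sum.inl j) ∈ s := by
      obtain ⟨i, j, rfl⟩ := hs.1
      exact ⟨j, by simp⟩
    have : latinCoord n 1 = fun k => Sum.inr (Sum.inl k) := rfl
    rw [this]
    simp only
    rw [dif_pos h]
    exact h.choose_spec
end

section
/- Let L be a Latin square of order n and let g be a non-identity automorphism of L which fixes each of the three parts R, C, E setwise. Then the cells fixed by g form a subsquare of L, and in particular g fixes at most n²/4 cells of L. -/
/-- A subsquare of a Latin square `L` of order `n`: sets `R₀, C₀, E₀` of rows,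
columns and entries of equal size such that the restriction of `L` to
`R₀ × C₀` takes values in `E₀` and forms a Latin square (every entry of `E₀`
occurs in each restricted row and each restricted column). -/
def IsSubsquare (n : ℕ) (L : Fin n → Fin n → Fin n)
    (R₀ C₀ E₀ : Finset (Fin n)) : Prop :=
  R₀.card = C₀.card ∧ C₀.card = E₀.card ∧
  (∀ i ∈ R₀, ∀ j ∈ C₀, L i j ∈ E₀) ∧
  (∀ i ∈ R₀, ∀ k ∈ E₀, ∃ j ∈ C₀, L i j = k) ∧
  (∀ j ∈ C₀, ∀ k ∈ E₀, ∃ i ∈ R₀, L i j = k)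


/-!
The automorphism acts on rows, columns and entries by maps `α, β, γ` with
`L (α i) (β j) = γ (L i j)` (an autotopism), and a cell `(i, j)` is fixed exactly when
`α i = i` and `β j = j`. The fixed rows, columns and entries are closed under `L`, and
injectivity of the rows and columns of `L` shows that each fixed row (column) meets every fixed
entry in a fixed column (row); so they form a subsquare, with `m²` fixed cells. It is proper
because `g ≠ 1`, and a row outside a proper subsquare of order `m` has entries outside it in all
`m` of its columns, whence `2m ≤ n`. If no row or no column is fixed, no cell is fixed and the
empty subsquare serves.
-/

open Function Finset

def tripleSet {A B C : Type*} (a : A) (b : B) (c : C) : Set (A ⊕ B ⊕ C) :=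
  {Sum.inl a, Sum.inr (Sum.inl b), Sum.inr (Sum.inr c)}

section TripleSet

variable {A B C A' B' C' : Type*}

theorem tripleSet_inj {a a' : A} {b b' : B} {c c' : C} :
    tripleSet a b c = tripleSet a' b' c' ↔ a = a' ∧ b = b' ∧ c = c' := by
  refine ⟨fun h => ?_, by rintro ⟨rfl, rfl, rfl⟩; rfl⟩
  have ha : Sum.inl a ∈ tripleSet a' b' c' := h ▸ by simp [tripleSet]
  have hb : Sum.inr (Sum.inl b) ∈ tripleSet a' b' c' := h ▸ by simp [tripleSet]
  have hc : Sum.inr (Sum.inr c) ∈ tripleSet a' b' c' := h ▸ by simp [tripleSet]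
  simp only [tripleSet, Set.mem_insert_iff, Set.mem_singleton_iff, Sum.inl.injEq,
    Sum.inr.injEq, reduceCtorEq, or_false, false_or] at ha hb hc
  exact ⟨ha, hb, hc⟩

theorem image_sumMap_tripleSet (α : A → A') (β : B → B') (γ : C → C')
    (a : A) (b : B) (c : C) :
    Sum.map α (Sum.map β γ) '' tripleSet a b c = tripleSet (α a) (β b) (γ c) := by
  simp [tripleSet, Set.image_insert_eq]

end TripleSet

def fixedPts {X : Type*} [Fintype X] [DecidableEq X] (f : X → X) : Finset X :=
  univ.filter fun x => f x = x

section FixedPts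

variable {X : Type*} [Fintype X] [DecidableEq X] {f : X → X}

@[simp]
theorem mem_fixedPts {x : X} : x ∈ fixedPts f ↔ f x = x := by
  simp [fixedPts]

theorem fixedPts_eq_univ_iff : fixedPts f = univ ↔ f = id := by
  simp [eq_univ_iff_forall, funext_iff]

end FixedPts

theorem exists_eq_sumMap_of_latinPart_eq {n : ℕ}
    {f : Fin n ⊕ Fin n ⊕ Fin n → Fin n ⊕ Fin n ⊕ Fin n}
    (hf : ∀ x, latinPart n (f x) = latinPart n x) :
    ∃ α β γ : Fin n → Fin n, f = Sum.map α (Sum.map β γ) := by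
  have hrow : ∀ i, ∃ a, f (.inl i) = .inl a := fun i => by
    have := hf (.inl i)
    rcases hx : f (.inl i) with a | b | c <;> simp_all [latinPart]
  have hcol : ∀ j, ∃ b, f (.inr (.inl j)) = .inr (.inl b) := fun j => by
    have := hf (.inr (.inl j))
    rcases hx : f (.inr (.inl j)) with a | b | c <;> simp_all [latinPart]
  have hent : ∀ k, ∃ c, f (.inr (.inr k)) = .inr (.inr c) := fun k => by
    have := hf (.inr (.inr k))
    rcases hx : f (.inr (.inr k)) with a | b | c <;> simp_all [latinPart]
  choose α hα using hrow
  choose β hβ using hcol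
  choose γ hγ using hent
  exact ⟨α, β, γ, funext fun x => by rcases x with i | j | k <;> simp [hα, hβ, hγ]⟩

section Subsquare

variable {n : ℕ} {L : Fin n → Fin n → Fin n} {R₀ C₀ E₀ : Finset (Fin n)}

theorem isSubsquare_empty : IsSubsquare n L ∅ ∅ ∅ := by
  simp [IsSubsquare]

theorem IsLatinSquare.isSubsquare (hL : IsLatinSquare n L) (hR : R₀.Nonempty)
    (hC : C₀.Nonempty) (hmem : ∀ i ∈ R₀, ∀ j ∈ C₀, L i j ∈ E₀)
    (hrow : ∀ i ∈ R₀, ∀ k ∈ E₀, ∃ j ∈ C₀, L i j = k)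
    (hcol : ∀ j ∈ C₀, ∀ k ∈ E₀, ∃ i ∈ R₀, L i j = k) :
    IsSubsquare n L R₀ C₀ E₀ := by
  obtain ⟨i, hi⟩ := hR
  obtain ⟨j, hj⟩ := hC
  have hCE : C₀.image (L i) = E₀ := by
    ext k
    simp only [mem_image]
    exact ⟨by rintro ⟨j, hj, rfl⟩; exact hmem i hi j hj, hrow i hi k⟩
  have hRE : R₀.image (fun i => L i j) = E₀ := by
    ext k
    simp only [mem_image]
    exact ⟨by rintro ⟨i, hi, rfl⟩; exact hmem i hi j hj, hcol j hj k⟩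
  have hcardC : C₀.card = E₀.card := by rw [← hCE, card_image_of_injective _ (hL.1 i).1]
  have hcardR : R₀.card = E₀.card := by rw [← hRE, card_image_of_injective _ (hL.2 j).1]
  exact ⟨hcardR.trans hcardC.symm, hcardC, hmem, hrow, hcol⟩

theorem IsSubsquare.eq_univ_of_eq_univ (hS : IsSubsquare n L R₀ C₀ E₀) (hR : R₀ = univ) :
    C₀ = univ ∧ E₀ = univ := by
  obtain ⟨hRC, hCE, -⟩ := hS
  subst hR
  exact ⟨eq_univ_of_card _ (hRC ▸ card_univ), eq_univ_of_card _ (hCE ▸ hRC ▸ card_univ)⟩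

-- A row `i' ∉ R₀` takes no value of `E₀` on `C₀`, since each such value already occurs in
-- its column within `R₀`.
theorem IsSubsquare.two_mul_card_le (hL : IsLatinSquare n L) (hS : IsSubsquare n L R₀ C₀ E₀)
    (hR : R₀ ≠ univ) : 2 * R₀.card ≤ n := by
  obtain ⟨i', hi'⟩ : ∃ i', i' ∉ R₀ := by simpa [eq_univ_iff_forall] using hR
  have hmaps : ∀ j ∈ C₀, L i' j ∈ E₀ᶜ := by
    intro j hj
    rw [mem_compl]
    intro hk
    obtain ⟨i, hi, hij⟩ := hS.2.2.2.2 j hj _ hk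
    exact hi' ((hL.2 j).1 hij ▸ hi)
  have hCE := card_le_card_of_injOn (L i') hmaps (hL.1 i').1.injOn
  rw [card_compl, Fintype.card_fin] at hCE
  have hE : E₀.card ≤ n := card_le_univ E₀ |>.trans_eq (Fintype.card_fin n)
  obtain ⟨hRC, hCE', -⟩ := hS
  omega

end Subsquare

def IsAutotopism {n : ℕ} (L : Fin n → Fin n → Fin n) (α β γ : Fin n → Fin n) : Prop :=
  ∀ i j, L (α i) (β j) = γ (L i j)

namespace IsAutotopism

variable {n : ℕ} {L : Fin n → Fin n → Fin n} {α β γ : Fin n → Fin n}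

theorem of_image_latinCells_subset
    (h : (fun s => Sum.map α (Sum.map β γ) '' s) '' latinCells n L ⊆ latinCells n L) :
    IsAutotopism L α β γ := by
  intro i j
  obtain ⟨i', j', hij⟩ := h ⟨_, ⟨i, j, rfl⟩, rfl⟩
  change _ '' tripleSet _ _ _ = tripleSet _ _ _ at hij
  rw [image_sumMap_tripleSet, tripleSet_inj] at hij
  obtain ⟨rfl, rfl, h⟩ := hij
  exact h.symm

variable (h : IsAutotopism L α β γ)
include h

theorem apply_eq_self {i j : Fin n} (hi : α i = i) (hj : β j = j) : γ (L i j) = L i j := by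
  rw [← h, hi, hj]

theorem col_eq_self (hL : IsLatinSquare n L) {i j : Fin n} (hi : α i = i)
    (hk : γ (L i j) = L i j) : β j = j :=
  (hL.1 i).1 <| by rw [← hk, ← h, hi]

theorem row_eq_self (hL : IsLatinSquare n L) {i j : Fin n} (hj : β j = j)
    (hk : γ (L i j) = L i j) : α i = i :=
  (hL.2 j).1 <| by simp only; rw [← hk, ← h, hj]

theorem image_tripleSet_eq_self_iff (i j : Fin n) :
    Sum.map α (Sum.map β γ) '' tripleSet i j (L i j) = tripleSet i j (L i j) ↔
      α i = i ∧ β j = j := by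
  rw [image_sumMap_tripleSet, tripleSet_inj]
  exact ⟨fun ⟨hi, hj, _⟩ => ⟨hi, hj⟩,
    fun ⟨hi, hj⟩ => ⟨hi, hj, h.apply_eq_self hi hj⟩⟩

theorem isSubsquare_fixedPts (hL : IsLatinSquare n L) (hR : (fixedPts α).Nonempty)
    (hC : (fixedPts β).Nonempty) :
    IsSubsquare n L (fixedPts α) (fixedPts β) (fixedPts γ) := by
  refine hL.isSubsquare hR hC (fun i hi j hj => ?_) (fun i hi k hk => ?_)
    (fun j hj k hk => ?_)
  · simp only [mem_fixedPts] at *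
    exact h.apply_eq_self hi hj
  · obtain ⟨j, rfl⟩ := (hL.1 i).2 k
    simp only [mem_fixedPts] at *
    exact ⟨j, h.col_eq_self hL hi hk, rfl⟩
  · obtain ⟨i, rfl⟩ := (hL.2 j).2 k
    simp only [mem_fixedPts] at *
    exact ⟨i, h.row_eq_self hL hj hk, rfl⟩

theorem ncard_fixed_latinCells :
    {s ∈ latinCells n L | Sum.map α (Sum.map β γ) '' s = s}.ncard =
      (fixedPts α).card * (fixedPts β).card := by
  have hcells : {s ∈ latinCells n L | Sum.map α (Sum.map β γ) '' s = s} =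
      (fun p : Fin n × Fin n => tripleSet p.1 p.2 (L p.1 p.2)) ''
        ↑(fixedPts α ×ˢ fixedPts β) := by
    ext s
    simp only [latinCells, Set.mem_ofPred_eq, Set.mem_image, coe_product, Set.mem_prod,
      mem_coe, mem_fixedPts, Prod.exists]
    constructor
    · rintro ⟨⟨i, j, rfl⟩, hs⟩
      exact ⟨i, j, (h.image_tripleSet_eq_self_iff i j).1 hs, rfl⟩
    · rintro ⟨i, j, hij, rfl⟩
      exact ⟨⟨i, j, rfl⟩, (h.image_tripleSet_eq_self_iff i j).2 hij⟩
  have hinj : Injective fun p : Fin n × Fin n => tripleSet p.1 p.2 (L p.1 p.2) :=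
    fun p q hpq => Prod.ext (tripleSet_inj.1 hpq).1 (tripleSet_inj.1 hpq).2.1
  rw [hcells, Set.ncard_image_of_injective _ hinj, Set.ncard_coe_finset, card_product]

theorem four_mul_card_mul_card_fixedPts_le (hL : IsLatinSquare n L)
    (hne : ¬(α = id ∧ β = id ∧ γ = id)) :
    4 * ((fixedPts α).card * (fixedPts β).card) ≤ n ^ 2 := by
  by_cases hRC : (fixedPts α).Nonempty ∧ (fixedPts β).Nonempty
  · have hS := h.isSubsquare_fixedPts hL hRC.1 hRC.2
    have hproper : fixedPts α ≠ univ := fun hα => by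
      obtain ⟨hβ, hγ⟩ := hS.eq_univ_of_eq_univ hα
      rw [fixedPts_eq_univ_iff] at hα hβ hγ
      exact hne ⟨hα, hβ, hγ⟩
    have h2 := hS.two_mul_card_le hL hproper
    rw [← hS.1]
    nlinarith
  · rcases not_and_or.1 hRC with hR | hC
    · simp [not_nonempty_iff_eq_empty.1 hR]
    · simp [not_nonempty_iff_eq_empty.1 hC]

end IsAutotopism

/-- If `g` is a non-identity automorphism of a Latin square `L` of order `n`
fixing each of the three parts `R, C, E` setwise, then the cells fixed by `g`
form a subsquare of `L`; in particular `g` fixes at most `n² / 4` cells. -/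
theorem latin_auto_fixing_parts_fixed_cells_subsquare (n : ℕ)
    (L : Fin n → Fin n → Fin n) (hL : IsLatinSquare n L)
    (g : Equiv.Perm (Fin n ⊕ Fin n ⊕ Fin n)) (hg : IsLatinAuto n L g)
    (hg1 : g ≠ 1) (hparts : ∀ x, latinPart n (g x) = latinPart n x) :
    (∃ R₀ C₀ E₀ : Finset (Fin n), IsSubsquare n L R₀ C₀ E₀ ∧
      ∀ i j : Fin n,
        (⇑g '' ({Sum.inl i, Sum.inr (Sum.inl j), Sum.inr (Sum.inr (L i j))} :
            Set (Fin n ⊕ Fin n ⊕ Fin n)) =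
          {Sum.inl i, Sum.inr (Sum.inl j), Sum.inr (Sum.inr (L i j))}) ↔
        (i ∈ R₀ ∧ j ∈ C₀)) ∧
    (Set.ncard {s ∈ latinCells n L | ⇑g '' s = s} : ℝ) ≤ (n : ℝ) ^ 2 / 4 := by
  obtain ⟨α, β, γ, hgαβγ⟩ := exists_eq_sumMap_of_latinPart_eq hparts
  have h : IsAutotopism L α β γ := .of_image_latinCells_subset (hgαβγ ▸ hg.2.le)
  have hne : ¬(α = id ∧ β = id ∧ γ = id) := by
    rintro ⟨rfl, rfl, rfl⟩
    exact hg1 (Equiv.ext fun x => by simp [hgαβγ])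
  have hfix := h.image_tripleSet_eq_self_iff
  simp only [tripleSet, ← hgαβγ] at hfix
  refine ⟨?_, ?_⟩
  · by_cases hRC : (fixedPts α).Nonempty ∧ (fixedPts β).Nonempty
    · exact ⟨_, _, _, h.isSubsquare_fixedPts hL hRC.1 hRC.2, by simpa using hfix⟩
    · refine ⟨∅, ∅, ∅, isSubsquare_empty, fun i j => ?_⟩
      simp only [hfix, notMem_empty, false_and, iff_false]
      exact fun ⟨hi, hj⟩ => hRC ⟨⟨i, mem_fixedPts.2 hi⟩, ⟨j, mem_fixedPts.2 hj⟩⟩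
  · rw [hgαβγ, h.ncard_fixed_latinCells, le_div_iff₀ (by norm_num)]
    exact_mod_cast (by linarith [h.four_mul_card_mul_card_fixedPts_le hL hne])
end

section
/- For n ≥ 4, the number of Latin squares of order n that admit at least one non-identity automorphism is at most 6·(n!)³·n^{5n²/8}. -/
/-!
A permutation `g` of `R ⊕ C ⊕ E` preserving the partition permutes the parts by some `σ ∈ S₃`
and acts on each part by a bijection, so there are at most `3! (n!)³` of them. For each `g ≠ 1`,
a Latin square admitting `g` is determined by its entries on at most `5n²/8` cells, so at most
`n ^ (5n²/8)` Latin squares admit `g`.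

Conjugating by the transpose `(r, c, e) ↦ (c, r, e)` and by the row inverse `(r, c, e) ↦ (r, e, c)`
reduces `σ` to the identity, the transposition `R ↔ C`, or the cycle `R → C → E → R`.
* `σ = 1`: `g` is an autotopism `(α, β, γ)`. A row fixed by `α` is determined by its entries in
  one column of each cycle of `β`, and row `α i` by row `i`. With `a, b` fixed rows and columns,
  `α` and `β` have at most `(n + a)/2` and `(n + b)/2` cycles, so `a (n + b)/2 + (n - a) n/2`
  cells suffice. The fixed rows and columns span a Latin subsquare on the fixed symbols, and a
  non-fixed row separates the fixed columns from the fixed symbols, so `4ab ≤ n²`.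
* `σ = (R C)`: `g` permutes the cells by `τ` with `L (τ p) = γ (L p)`, so one cell per cycle of
  `τ` suffices; the fixed cells of `τ` lie on the graph of a function, so at most `(n² + n)/2`.
* `σ = (R C E)`: `L (γ (L i j)) (α i) = β j`, so row `i` determines column `α i`; by induction
  over the rows the `(n² + n)/2` cells `(r, α i)` with `r ≤ i` suffice.
-/

open Equiv Finset
open scoped Classical

namespace Equiv.Perm

variable {α β X : Type*}

theorem exists_eq_prodShear {g : Perm (α × β)} {σ : Perm α} (h : ∀ x, (g x).1 = σ x.1) :
    ∃ e : α → Perm β, g = prodShear σ e := by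
  have hbij : ∀ a, Function.Bijective fun b => (g (a, b)).2 := fun a =>
    ⟨fun b b' hb => by
      have : g (a, b) = g (a, b') := Prod.ext (by rw [h, h]) hb
      simpa using g.injective this,
    fun b' => ⟨(g.symm (σ a, b')).2, by
      have h1 : (a, (g.symm (σ a, b')).2) = g.symm (σ a, b') := by
        refine Prod.ext (σ.injective ?_).symm rfl
        rw [← h, apply_symm_apply]
      show (g (a, _)).2 = b'
      rw [h1, apply_symm_apply]⟩⟩
  exact ⟨fun a => ofBijective _ (hbij a), Equiv.ext fun x => Prod.ext (h x) rfl⟩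

theorem card_filter_fst_le [Fintype α] [Fintype β] [DecidableEq α] [DecidableEq β] :
    #{g : Perm (α × β) | ∃ σ : Perm α, ∀ x, (g x).1 = σ x.1} ≤
      (Fintype.card α).factorial * (Fintype.card β).factorial ^ Fintype.card α := by
  calc #{g : Perm (α × β) | ∃ σ : Perm α, ∀ x, (g x).1 = σ x.1}
      ≤ #((univ : Finset (Perm α × (α → Perm β))).image fun p => prodShear p.1 p.2) := by
        refine card_le_card fun g hg => ?_
        obtain ⟨σ, hσ⟩ := (mem_filter.1 hg).2
        obtain ⟨e, rfl⟩ := exists_eq_prodShear hσ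
        exact mem_image.2 ⟨(σ, e), mem_univ _, rfl⟩
    _ ≤ _ := card_image_le
    _ = _ := by simp [Fintype.card_perm]

theorem image_image_mul (a b : Perm X) (C : Set (Set X)) :
    (fun t => ⇑(a * b) '' t) '' C = (fun t => ⇑a '' t) '' ((fun t => ⇑b '' t) '' C) := by
  simp [Set.image_image, Set.image_comp]

def MeetsAllCycles (π : Perm X) (R : Set X) : Prop :=
  ∀ T : Set X, R ⊆ T → Set.MapsTo π T T → ∀ x, x ∈ T

variable [Fintype X] [DecidableEq X]

theorem exists_meetsAllCycles (π : Perm X) :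
    ∃ R : Finset X, ({x | π x = x} : Finset X) ⊆ R ∧
      2 * #R ≤ Fintype.card X + #{x | π x = x} ∧ π.MeetsAllCycles R := by
  -- `R` consists of the minima of the cycles of `π` for an enumeration `f` of `X`.
  set f := Fintype.equivFin X
  set F : Finset X := {x | π x = x}
  set R : Finset X := {x | ∀ y, π.SameCycle x y → f x ≤ f y}
  have hmin : ∀ x, ∃ m ∈ R, π.SameCycle m x := fun x => by
    obtain ⟨m, hm, hmin⟩ := exists_min_image {y | π.SameCycle x y} f
      ⟨x, mem_filter.2 ⟨mem_univ _, SameCycle.refl _ _⟩⟩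
    refine ⟨m, mem_filter.2 ⟨mem_univ _, fun y hy => hmin y ?_⟩, (mem_filter.1 hm).2.symm⟩
    exact mem_filter.2 ⟨mem_univ _, (mem_filter.1 hm).2.trans hy⟩
  have hfix : F ⊆ R := fun x hx =>
    mem_filter.2 ⟨mem_univ _, fun y hy => (congrArg f (hy.eq_of_left (mem_filter.1 hx).2)).le⟩
  refine ⟨R, hfix, ?_, fun T hRT hT x => ?_⟩
  · -- `π` maps the minima that are not fixed points to non-minima of the same cycle.
    have hout : #(R \ F) ≤ #(univ \ R) := by
      refine card_le_card_of_injOn π (fun x hx => ?_) π.injective.injOn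
      simp only [F, R, coe_sdiff, Set.mem_sdiff, mem_coe, mem_filter, mem_univ, true_and,
        coe_univ, Set.mem_univ] at hx ⊢
      refine fun hπx => hx.2 (f.injective (le_antisymm ?_ (hx.1 _ ?_)))
      · exact hπx x (sameCycle_apply_left.2 (SameCycle.refl _ _))
      · exact sameCycle_apply_right.2 (SameCycle.refl _ _)
    rw [card_sdiff_of_subset hfix, card_sdiff_of_subset (subset_univ _), card_univ] at hout
    have := card_le_card hfix
    have := card_le_univ R
    omega
  · obtain ⟨m, hm, hmx⟩ := hmin x
    obtain ⟨k, rfl⟩ := hmx.exists_nat_pow_eq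
    clear hmx
    induction k with
    | zero => exact hRT hm
    | succ k ih => rw [pow_succ', mul_apply]; exact hT ih

theorem eq_one_of_card_le_card_fixed {π : Perm X} (h : Fintype.card X ≤ #{x | π x = x}) :
    π = 1 :=
  Equiv.ext fun x => by
    have hx : x ∈ ({x | π x = x} : Finset X) := by
      rw [eq_univ_of_card _ (le_antisymm (card_le_univ _) h)]
      exact mem_univ x
    simpa using hx

end Equiv.Perm

theorem two_mul_card_filter_fst_le_snd (X : Type*) [Fintype X] [LinearOrder X] :
    2 * #{p : X × X | p.1 ≤ p.2} = Fintype.card X ^ 2 + Fintype.card X := by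
  set U : Finset (X × X) := {p | p.1 ≤ p.2}
  set V : Finset (X × X) := {p | p.2 ≤ p.1}
  have hswap : #V = #U := by
    refine card_nbij' Prod.swap Prod.swap ?_ ?_ ?_ ?_ <;> intro p <;> simp [U, V]
  have hunion : U ∪ V = univ := by
    ext p
    simp [U, V, le_total]
  have hinter : U ∩ V = (univ : Finset X).diag := by
    ext p
    simp [U, V, le_antisymm_iff]
  have := card_union_add_card_inter U V
  rw [hunion, hinter, diag_card, hswap, card_univ, card_univ, Fintype.card_prod] at this
  linarith [sq (Fintype.card X)]

theorem card_le_pow_of_eqOn {γ ι β : Type*} [Fintype β] (F : Finset γ) (v : γ → ι → β)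
    (S : Finset ι) (h : ∀ x ∈ F, ∀ y ∈ F, (∀ i ∈ S, v x i = v y i) → x = y) :
    #F ≤ Fintype.card β ^ #S := by
  calc #F ≤ #(univ : Finset (S → β)) :=
        card_le_card_of_injOn (fun x i => v x i) (fun _ _ => mem_univ _)
          fun x hx y hy hxy => h x hx y hy fun i hi => congrFun hxy ⟨i, hi⟩
    _ = _ := by simp

abbrev RCE (n : ℕ) := Fin n ⊕ Fin n ⊕ Fin n

def latinEquiv (n : ℕ) : RCE n ≃ Fin 3 × Fin n where
  toFun x := (latinPart n x, Sum.elim id (Sum.elim id id) x)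
  invFun p := ![Sum.inl, Sum.inr ∘ Sum.inl, Sum.inr ∘ Sum.inr] p.1 p.2
  left_inv := by rintro (i | j | k) <;> rfl
  right_inv := by rintro ⟨t, i⟩; fin_cases t <;> rfl

@[simp] theorem latinEquiv_fst (n : ℕ) (x : RCE n) : (latinEquiv n x).1 = latinPart n x := rfl

@[simp] theorem latinPart_latinEquiv_symm (n : ℕ) (p : Fin 3 × Fin n) :
    latinPart n ((latinEquiv n).symm p) = p.1 := by
  rw [← latinEquiv_fst, apply_symm_apply]

def IsParatopism (n : ℕ) (σ : Perm (Fin 3)) (g : Perm (RCE n)) : Prop :=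
  ∀ x, latinPart n (g x) = σ (latinPart n x)

namespace IsParatopism

variable {n : ℕ} {σ τ : Perm (Fin 3)} {g s : Perm (RCE n)}

theorem mul (hs : IsParatopism n τ s) (hg : IsParatopism n σ g) :
    IsParatopism n (τ * σ) (s * g) := fun x => by
  simp only [Perm.mul_apply, hs (g x), hg x]

theorem inv (hs : IsParatopism n τ s) : IsParatopism n τ⁻¹ s⁻¹ := fun x => by
  rw [Perm.eq_inv_iff_eq, ← hs]
  simp

theorem conj (hs : IsParatopism n τ s) (hg : IsParatopism n σ g) :
    IsParatopism n (τ * σ * τ⁻¹) (s * g * s⁻¹) :=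
  (hs.mul hg).mul hs.inv

theorem exists_components (hg : IsParatopism n σ g) :
    ∃ e : Fin 3 → Perm (Fin n),
      ∀ t i, g ((latinEquiv n).symm (t, i)) = (latinEquiv n).symm (σ t, e t i) := by
  obtain ⟨e, he⟩ := Perm.exists_eq_prodShear (g := (latinEquiv n).permCongr g) (σ := σ)
    fun y => by simpa [permCongr_apply] using hg ((latinEquiv n).symm y)
  refine ⟨e, fun t i => ?_⟩
  simpa [permCongr_apply] using congrArg (latinEquiv n).symm (Equiv.ext_iff.1 he (t, i))

end IsParatopism

theorem card_paratopisms_le (n : ℕ) :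
    #{g : Perm (RCE n) | ∃ σ, IsParatopism n σ g} ≤ 6 * n.factorial ^ 3 := by
  calc #{g : Perm (RCE n) | ∃ σ, IsParatopism n σ g}
      ≤ #{g : Perm (Fin 3 × Fin n) | ∃ σ : Perm (Fin 3), ∀ x, (g x).1 = σ x.1} := by
        refine card_le_card_of_injOn (latinEquiv n).permCongr (fun g hg => ?_)
          (latinEquiv n).permCongr.injective.injOn
        obtain ⟨σ, hσ⟩ := (mem_filter.1 hg).2
        exact mem_filter.2 ⟨mem_univ _, σ, fun y => by
          simpa [permCongr_apply] using hσ ((latinEquiv n).symm y)⟩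
    _ ≤ _ := Perm.card_filter_fst_le
    _ = _ := by rw [Fintype.card_fin, Fintype.card_fin]; rfl

section Cells

variable {n : ℕ} {L : Fin n → Fin n → Fin n} {g : Perm (RCE n)}

theorem cell_mem_latinCells_iff {a b c : Fin n} :
    ({Sum.inl a, Sum.inr (Sum.inl b), Sum.inr (Sum.inr c)} : Set (RCE n)) ∈ latinCells n L ↔
      L a b = c := by
  refine ⟨fun ⟨i, j, h⟩ => ?_, fun h => ⟨a, b, h ▸ rfl⟩⟩
  have hmem := fun x => (Set.ext_iff.1 h x).1
  have ha := hmem (Sum.inl a) (by simp)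
  have hb := hmem (Sum.inr (Sum.inl b)) (by simp)
  have hc := hmem (Sum.inr (Sum.inr c)) (by simp)
  simp only [Set.mem_insert_iff, Set.mem_singleton_iff, Sum.inl.injEq, Sum.inr.injEq,
    reduceCtorEq, or_false, false_or] at ha hb hc
  rw [ha, hb, hc]

theorem latinCells_injective : Function.Injective (latinCells n) := fun L L' h => by
  funext i j
  exact (cell_mem_latinCells_iff.1 (h ▸ ⟨i, j, rfl⟩ : _ ∈ latinCells n L')).symm

theorem IsLatinAuto.cell_mem (h : IsLatinAuto n L g) (i j : Fin n) :
    ({g (Sum.inl i), g (Sum.inr (Sum.inl j)), g (Sum.inr (Sum.inr (L i j)))} : Set (RCE n)) ∈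
      latinCells n L := by
  rw [← h.2]
  exact ⟨_, ⟨i, j, rfl⟩, by simp [Set.image_insert_eq]⟩

theorem IsLatinAuto.conj {M : Fin n → Fin n → Fin n} {s : Perm (RCE n)} {τ : Perm (Fin 3)}
    (hs : IsParatopism n τ s) (hM : latinCells n M = (fun t => ⇑s '' t) '' latinCells n L)
    (hg : IsLatinAuto n L g) : IsLatinAuto n M (s * g * s⁻¹) := by
  obtain ⟨⟨σ, hσ⟩, hcells⟩ := hg
  refine ⟨⟨_, hs.conj hσ⟩, ?_⟩
  rw [hM, Perm.image_image_mul, Perm.image_image_mul, ← Perm.image_image_mul s⁻¹,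
    inv_mul_cancel]
  simp [hcells]

end Cells

noncomputable def squaresWithAuto (n : ℕ) (g : Perm (RCE n)) : Finset (Fin n → Fin n → Fin n) :=
  {L | IsLatinSquare n L ∧ IsLatinAuto n L g}

theorem card_squaresWithAuto_le_of_eqOn {n : ℕ} {g : Perm (RCE n)} (S : Finset (Fin n × Fin n))
    (hS : 8 * #S ≤ 5 * n ^ 2)
    (h : ∀ L ∈ squaresWithAuto n g, ∀ L' ∈ squaresWithAuto n g,
      (∀ p ∈ S, L p.1 p.2 = L' p.1 p.2) → L = L') :
    #(squaresWithAuto n g) ≤ n ^ (5 * n ^ 2 / 8) := by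
  calc #(squaresWithAuto n g) ≤ Fintype.card (Fin n) ^ #S :=
        card_le_pow_of_eqOn _ (fun L p => L p.1 p.2) S h
    _ ≤ n ^ (5 * n ^ 2 / 8) := by
        rw [Fintype.card_fin]
        rcases Nat.eq_zero_or_pos n with rfl | hn
        · simp_all
        · exact Nat.pow_le_pow_right hn ((Nat.le_div_iff_mul_le (by norm_num)).2 (by linarith))

section Conjugation

variable {n : ℕ} {L : Fin n → Fin n → Fin n}

theorem card_squaresWithAuto_le_conj {s : Perm (RCE n)} {τ : Perm (Fin 3)}
    (hs : IsParatopism n τ s) (Φ : (Fin n → Fin n → Fin n) → Fin n → Fin n → Fin n)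
    (hΦ : ∀ L, IsLatinSquare n L →
      IsLatinSquare n (Φ L) ∧ latinCells n (Φ L) = (fun t => ⇑s '' t) '' latinCells n L)
    (g : Perm (RCE n)) :
    #(squaresWithAuto n g) ≤ #(squaresWithAuto n (s * g * s⁻¹)) := by
  refine card_le_card_of_injOn Φ (fun L hL => ?_) fun L hL L' hL' h => ?_
  · obtain ⟨hLat, hAuto⟩ := (mem_filter.1 hL).2
    obtain ⟨hΦLat, hcells⟩ := hΦ L hLat
    exact mem_filter.2 ⟨mem_univ _, hΦLat, hAuto.conj hs hcells⟩
  · have h' := (hΦ L (mem_filter.1 hL).2.1).2.symm.trans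
      ((congrArg (latinCells n) h).trans (hΦ L' (mem_filter.1 hL').2.1).2)
    exact latinCells_injective (Set.image_injective.2 (Set.image_injective.2 s.injective) h')

def swapRowCol (n : ℕ) : Perm (RCE n) :=
  (sumAssoc _ _ _).symm.trans (((sumComm _ _).sumCongr (Equiv.refl _)).trans (sumAssoc _ _ _))

def swapColEntry (n : ℕ) : Perm (RCE n) :=
  (Equiv.refl _).sumCongr (sumComm _ _)

theorem isParatopism_swapRowCol : IsParatopism n (swap 0 1) (swapRowCol n) := by
  rintro (i | j | k) <;> rfl

theorem isParatopism_swapColEntry : IsParatopism n (swap 1 2) (swapColEntry n) := by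
  rintro (i | j | k) <;> rfl

theorem latinCells_transpose :
    latinCells n (fun j i => L i j) = (fun t => ⇑(swapRowCol n) '' t) '' latinCells n L := by
  ext t
  simp only [latinCells, Set.mem_image, Set.mem_ofPred_eq]
  constructor
  · rintro ⟨j, i, rfl⟩
    exact ⟨_, ⟨i, j, rfl⟩, by simp [Set.image_insert_eq, swapRowCol, Set.insert_comm]⟩
  · rintro ⟨_, ⟨i, j, rfl⟩, rfl⟩
    exact ⟨j, i, by simp [Set.image_insert_eq, swapRowCol, Set.insert_comm]⟩

theorem card_squaresWithAuto_le_conj_swapRowCol (g : Perm (RCE n)) :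
    #(squaresWithAuto n g) ≤ #(squaresWithAuto n (swapRowCol n * g * (swapRowCol n)⁻¹)) :=
  card_squaresWithAuto_le_conj isParatopism_swapRowCol (fun L j i => L i j)
    (fun _ hL => ⟨⟨hL.2, hL.1⟩, latinCells_transpose⟩) g

variable [NeZero n]

theorem IsLatinSquare.rowInv (hL : IsLatinSquare n L) :
    IsLatinSquare n (fun i k => Function.invFun (L i) k) := by
  refine ⟨fun i => ?_, fun k => ⟨fun i i' h => ?_, fun j => ?_⟩⟩
  · exact ⟨(Function.rightInverse_invFun (hL.1 i).2).injective,
      (Function.leftInverse_invFun (hL.1 i).1).surjective⟩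
  · have hi := Function.rightInverse_invFun (hL.1 i).2 k
    have hi' := Function.rightInverse_invFun (hL.1 i').2 k
    simp only at h
    rw [h] at hi
    exact (hL.2 _).1 (hi.trans hi'.symm)
  · obtain ⟨i, hi⟩ := (hL.2 j).2 k
    exact ⟨i, by simp only [← hi, Function.leftInverse_invFun (hL.1 i).1 j]⟩

theorem latinCells_rowInv (hL : IsLatinSquare n L) :
    latinCells n (fun i k => Function.invFun (L i) k) =
      (fun t => ⇑(swapColEntry n) '' t) '' latinCells n L := by
  ext t
  simp only [latinCells, Set.mem_image, Set.mem_ofPred_eq]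
  constructor
  · rintro ⟨i, k, rfl⟩
    refine ⟨_, ⟨i, Function.invFun (L i) k, rfl⟩, ?_⟩
    simp [Set.image_insert_eq, swapColEntry, Set.pair_comm,
      Function.rightInverse_invFun (hL.1 i).2 k]
  · rintro ⟨_, ⟨i, j, rfl⟩, rfl⟩
    refine ⟨i, L i j, ?_⟩
    simp [Set.image_insert_eq, swapColEntry, Set.pair_comm,
      Function.leftInverse_invFun (hL.1 i).1 j]

theorem card_squaresWithAuto_le_conj_swapColEntry (g : Perm (RCE n)) :
    #(squaresWithAuto n g) ≤ #(squaresWithAuto n (swapColEntry n * g * (swapColEntry n)⁻¹)) :=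
  card_squaresWithAuto_le_conj isParatopism_swapColEntry _
    (fun _ hL => ⟨hL.rowInv, latinCells_rowInv hL⟩) g

end Conjugation

section Autotopism

variable {n : ℕ} {L : Fin n → Fin n → Fin n} {α β γ : Perm (Fin n)}

theorem IsLatinSquare.image_fixed_row (hL : IsLatinSquare n L)
    (h : ∀ i j, L (α i) (β j) = γ (L i j)) {i : Fin n} (hi : α i = i) :
    ({j | β j = j} : Finset (Fin n)).image (L i) = ({k | γ k = k} : Finset (Fin n)) := by
  ext k
  simp only [mem_image, mem_filter, mem_univ, true_and]
  constructor
  · rintro ⟨j, hj, rfl⟩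
    rw [← h, hi, hj]
  · intro hk
    obtain ⟨j, rfl⟩ := (hL.1 i).2 k
    refine ⟨j, (hL.1 i).1 ?_, rfl⟩
    calc L i (β j) = L (α i) (β j) := by rw [hi]
      _ = L i j := (h i j).trans hk

theorem IsLatinSquare.disjoint_image_fixed_row (hL : IsLatinSquare n L)
    (h : ∀ i j, L (α i) (β j) = γ (L i j)) {i : Fin n} (hi : α i ≠ i) :
    Disjoint (({j | β j = j} : Finset (Fin n)).image (L i)) ({k | γ k = k} : Finset (Fin n)) := by
  refine disjoint_left.2 fun k hk hkC => hi ?_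
  obtain ⟨j, hj, rfl⟩ := mem_image.1 hk
  simp only [mem_filter, mem_univ, true_and] at hj hkC
  refine (hL.2 j).1 ?_
  calc L (α i) j = L (α i) (β j) := by rw [hj]
    _ = L i j := (h i j).trans hkC

theorem IsLatinSquare.four_mul_card_fixed_mul_le (hL : IsLatinSquare n L)
    (h : ∀ i j, L (α i) (β j) = γ (L i j)) (hne : ¬(α = 1 ∧ β = 1 ∧ γ = 1)) :
    4 * (#{i | α i = i} * #{j | β j = j}) ≤ n ^ 2 := by
  set A : Finset (Fin n) := {i | α i = i}
  set B : Finset (Fin n) := {j | β j = j}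
  set C : Finset (Fin n) := {k | γ k = k}
  rcases A.eq_empty_or_nonempty with hA | ⟨i₀, hi₀⟩
  · simp [hA]
  rcases B.eq_empty_or_nonempty with hB | ⟨j₀, hj₀⟩
  · simp [hB]
  have hBC : #B = #C :=
    (card_image_of_injective _ (hL.1 i₀).1).symm.trans
      (congrArg card (hL.image_fixed_row h (mem_filter.1 hi₀).2))
  have hAC : #A = #C :=
    (card_image_of_injective _ (hL.2 j₀).1).symm.trans
      (congrArg card ((show IsLatinSquare n fun j i => L i j from ⟨hL.2, hL.1⟩).image_fixed_row
        (fun j i => h i j) (mem_filter.1 hj₀).2))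
  obtain ⟨i₁, hi₁⟩ : ∃ i₁, α i₁ ≠ i₁ := by
    by_contra! hall
    have hAn : #A = n := by
      rw [show A = univ from eq_univ_of_forall fun i => mem_filter.2 ⟨mem_univ i, hall i⟩,
        card_univ, Fintype.card_fin]
    have hfull : ∀ π : Perm (Fin n), n ≤ #{x | π x = x} → π = 1 := fun π hπ =>
      Perm.eq_one_of_card_le_card_fixed (by rwa [Fintype.card_fin])
    exact hne ⟨hfull α (show n ≤ #A by omega), hfull β (show n ≤ #B by omega),
      hfull γ (show n ≤ #C by omega)⟩
  have hBCn : #B + #C ≤ n := by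
    rw [← card_image_of_injective B (hL.1 i₁).1,
      ← card_union_of_disjoint (hL.disjoint_image_fixed_row h hi₁)]
    simpa using card_le_univ (B.image (L i₁) ∪ C)
  rw [hAC, hBC] at *
  nlinarith

theorem eq_of_autotopism_of_eqOn {L' : Fin n → Fin n → Fin n}
    (h : ∀ i j, L (α i) (β j) = γ (L i j)) (h' : ∀ i j, L' (α i) (β j) = γ (L' i j))
    {Rα Rβ : Finset (Fin n)} (hα : α.MeetsAllCycles Rα) (hβ : β.MeetsAllCycles Rβ)
    (hS : ∀ p ∈ ({i | α i = i} : Finset (Fin n)) ×ˢ Rβ ∪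
      (Rα \ ({i | α i = i} : Finset (Fin n))) ×ˢ univ,
      L p.1 p.2 = L' p.1 p.2) :
    L = L' := by
  refine funext (hα {i | L i = L' i} (fun i hi => ?_) fun i (hi : L i = L' i) => ?_)
  · by_cases hiA : α i = i
    · refine funext (hβ {j | L i j = L' i j} (fun j hj => hS (i, j) ?_)
        fun j (hj : L i j = L' i j) => ?_)
      · exact mem_union_left _ (mem_product.2 ⟨by simpa using hiA, hj⟩)
      · show L i (β j) = L' i (β j)
        rw [← hiA, h, h', hj]
    · exact funext fun j => hS (i, j) (mem_union_right _ (mem_product.2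
        ⟨mem_sdiff.2 ⟨hi, by simpa using hiA⟩, mem_univ _⟩))
  · show L (α i) = L' (α i)
    funext j
    obtain ⟨j, rfl⟩ := β.surjective j
    rw [h, h', hi]

end Autotopism

section Cases

variable {n : ℕ} {g : Perm (RCE n)}

theorem card_squaresWithAuto_le_of_isParatopism_one (hg : g ≠ 1) (hσ : IsParatopism n 1 g) :
    #(squaresWithAuto n g) ≤ n ^ (5 * n ^ 2 / 8) := by
  obtain ⟨e, he⟩ := hσ.exists_components
  have h0 : ∀ i, g (Sum.inl i) = Sum.inl (e 0 i) := he 0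
  have h1 : ∀ j, g (Sum.inr (Sum.inl j)) = Sum.inr (Sum.inl (e 1 j)) := he 1
  have h2 : ∀ k, g (Sum.inr (Sum.inr k)) = Sum.inr (Sum.inr (e 2 k)) := he 2
  have hrel : ∀ L, IsLatinAuto n L g → ∀ i j, L (e 0 i) (e 1 j) = e 2 (L i j) :=
    fun L hL i j => cell_mem_latinCells_iff.1 (by simpa only [h0, h1, h2] using hL.cell_mem i j)
  have hne : ¬(e 0 = 1 ∧ e 1 = 1 ∧ e 2 = 1) := by
    rintro ⟨he0, he1, he2⟩
    refine hg (Equiv.ext ?_)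
    rintro (i | j | k)
    · simp [h0, he0]
    · simp [h1, he1]
    · simp [h2, he2]
  obtain ⟨Rα, hAR, hRα, hα⟩ := (e 0).exists_meetsAllCycles
  obtain ⟨Rβ, -, hRβ, hβ⟩ := (e 1).exists_meetsAllCycles
  set A : Finset (Fin n) := {i | e 0 i = i}
  set B : Finset (Fin n) := {j | e 1 j = j}
  rcases (squaresWithAuto n g).eq_empty_or_nonempty with hempty | ⟨L₀, hL₀⟩
  · simp [hempty]
  refine card_squaresWithAuto_le_of_eqOn (A ×ˢ Rβ ∪ (Rα \ A) ×ˢ univ) ?_ fun L hL L' hL' hS =>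
    eq_of_autotopism_of_eqOn (hrel L (mem_filter.1 hL).2.2) (hrel L' (mem_filter.1 hL').2.2)
      hα hβ hS
  have hfix := (mem_filter.1 hL₀).2.1.four_mul_card_fixed_mul_le
    (hrel L₀ (mem_filter.1 hL₀).2.2) hne
  have hcard : #(A ×ˢ Rβ ∪ (Rα \ A) ×ˢ univ) ≤ #A * #Rβ + #(Rα \ A) * n := by
    refine (card_union_le _ _).trans ?_
    rw [card_product, card_product, card_univ, Fintype.card_fin]
  have hsplit := card_sdiff_add_card_eq_card hAR
  simp only [Fintype.card_fin] at hRα hRβ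
  nlinarith [Nat.mul_le_mul_left (4 * #A) hRβ, Nat.mul_le_mul_left (4 * n) hRα]

theorem card_squaresWithAuto_le_of_isParatopism_swap (hn : 4 ≤ n)
    (hσ : IsParatopism n (swap 0 1) g) :
    #(squaresWithAuto n g) ≤ n ^ (5 * n ^ 2 / 8) := by
  obtain ⟨e, he⟩ := hσ.exists_components
  have h0 : ∀ i, g (Sum.inl i) = Sum.inr (Sum.inl (e 0 i)) := he 0
  have h1 : ∀ j, g (Sum.inr (Sum.inl j)) = Sum.inl (e 1 j) := he 1
  have h2 : ∀ k, g (Sum.inr (Sum.inr k)) = Sum.inr (Sum.inr (e 2 k)) := he 2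
  set τ : Perm (Fin n × Fin n) := (prodComm _ _).trans ((e 1).prodCongr (e 0))
  have hrel : ∀ L, IsLatinAuto n L g → ∀ p, L (τ p).1 (τ p).2 = e 2 (L p.1 p.2) := by
    intro L hL p
    have hcell := hL.cell_mem p.1 p.2
    rw [h0, h1, h2, Set.insert_comm] at hcell
    exact cell_mem_latinCells_iff.1 hcell
  obtain ⟨R, -, hR, hτ⟩ := τ.exists_meetsAllCycles
  have hfix : #{p | τ p = p} ≤ n := by
    calc #{p | τ p = p} ≤ #(univ : Finset (Fin n)) := by
          refine card_le_card_of_injOn Prod.fst (fun _ _ => mem_univ _) fun p hp q hq hpq => ?_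
          have hdiag : ∀ p, p ∈ ({p | τ p = p} : Finset _) → p.2 = e 0 p.1 :=
            fun p hp => (congrArg Prod.snd (mem_filter.1 hp).2).symm
          exact Prod.ext hpq (by rw [hdiag p hp, hdiag q hq, hpq])
      _ = n := by simp
  refine card_squaresWithAuto_le_of_eqOn R ?_ fun L hL L' hL' hS => ?_
  · simp only [Fintype.card_prod, Fintype.card_fin] at hR
    nlinarith
  · have hpos := hτ {p | L p.1 p.2 = L' p.1 p.2} hS fun p (hp : L p.1 p.2 = L' p.1 p.2) => by
      show L (τ p).1 (τ p).2 = L' (τ p).1 (τ p).2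
      rw [hrel L (mem_filter.1 hL).2.2, hrel L' (mem_filter.1 hL').2.2, hp]
    exact funext fun i => funext fun j => hpos (i, j)

theorem card_squaresWithAuto_le_of_isParatopism_finRotate (hn : 4 ≤ n)
    (hσ : IsParatopism n (finRotate 3) g) :
    #(squaresWithAuto n g) ≤ n ^ (5 * n ^ 2 / 8) := by
  obtain ⟨e, he⟩ := hσ.exists_components
  have h0 : ∀ i, g (Sum.inl i) = Sum.inr (Sum.inl (e 0 i)) := he 0
  have h1 : ∀ j, g (Sum.inr (Sum.inl j)) = Sum.inr (Sum.inr (e 1 j)) := he 1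
  have h2 : ∀ k, g (Sum.inr (Sum.inr k)) = Sum.inl (e 2 k) := he 2
  have hrel : ∀ L, IsLatinAuto n L g → ∀ i j, L (e 2 (L i j)) (e 0 i) = e 1 j := by
    intro L hL i j
    have hcell := hL.cell_mem i j
    rw [h0, h1, h2, Set.pair_comm, Set.insert_comm] at hcell
    exact cell_mem_latinCells_iff.1 hcell
  have hcol : ∀ L ∈ squaresWithAuto n g, ∀ L' ∈ squaresWithAuto n g, ∀ i, L i = L' i →
      ∀ r, L r (e 0 i) = L' r (e 0 i) := by
    intro L hL L' hL' i hi r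
    obtain ⟨j, hj⟩ := ((mem_filter.1 hL).2.1.1 i).2 ((e 2).symm r)
    have hj' : L' i j = (e 2).symm r := by rw [← hi, hj]
    calc L r (e 0 i) = L (e 2 (L i j)) (e 0 i) := by rw [hj, apply_symm_apply]
      _ = L' (e 2 (L' i j)) (e 0 i) := by
        rw [hrel L (mem_filter.1 hL).2.2, hrel L' (mem_filter.1 hL').2.2]
      _ = L' r (e 0 i) := by rw [hj', apply_symm_apply]
  set S := ({p | p.1 ≤ p.2} : Finset (Fin n × Fin n)).map
    ((Equiv.refl _).prodCongr (e 0)).toEmbedding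
  refine card_squaresWithAuto_le_of_eqOn S ?_ fun L hL L' hL' hS => ?_
  · have := two_mul_card_filter_fst_le_snd (Fin n)
    rw [card_map]
    simp only [Fintype.card_fin] at this
    nlinarith
  · refine funext fun r => ?_
    induction r using WellFoundedLT.induction with
    | _ r ih =>
      funext j
      obtain ⟨i, rfl⟩ := (e 0).surjective j
      rcases le_or_gt r i with hri | hir
      · exact hS (r, e 0 i) (mem_map_equiv.2 (by simpa using hri))
      · exact hcol L hL L' hL' i (ih i hir) r

end Cases

theorem card_squaresWithAuto_le {n : ℕ} (hn : 4 ≤ n) {σ : Perm (Fin 3)} {g : Perm (RCE n)}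
    (hg : g ≠ 1) (hσ : IsParatopism n σ g) :
    #(squaresWithAuto n g) ≤ n ^ (5 * n ^ 2 / 8) := by
  have : NeZero n := ⟨by omega⟩
  have hS₃ : ∀ σ : Perm (Fin 3), σ = 1 ∨ σ = swap 0 1 ∨ σ = swap 0 2 ∨ σ = swap 1 2 ∨
      σ = finRotate 3 ∨ σ = (finRotate 3)⁻¹ := by decide
  rcases hS₃ σ with rfl | rfl | rfl | rfl | rfl | rfl
  · exact card_squaresWithAuto_le_of_isParatopism_one hg hσ
  · exact card_squaresWithAuto_le_of_isParatopism_swap hn hσ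
  · have h := isParatopism_swapColEntry.conj hσ
    rw [show swap 1 2 * swap 0 2 * (swap 1 2)⁻¹ = swap (0 : Fin 3) 1 by decide] at h
    exact (card_squaresWithAuto_le_conj_swapColEntry g).trans
      (card_squaresWithAuto_le_of_isParatopism_swap hn h)
  · have h := isParatopism_swapColEntry.conj (isParatopism_swapRowCol.conj hσ)
    rw [show swap 1 2 * (swap 0 1 * swap 1 2 * (swap 0 1)⁻¹) * (swap 1 2)⁻¹ =
      swap (0 : Fin 3) 1 by decide] at h
    exact (card_squaresWithAuto_le_conj_swapRowCol g).trans
      ((card_squaresWithAuto_le_conj_swapColEntry _).trans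
        (card_squaresWithAuto_le_of_isParatopism_swap hn h))
  · exact card_squaresWithAuto_le_of_isParatopism_finRotate hn hσ
  · have h := isParatopism_swapColEntry.conj hσ
    rw [show swap 1 2 * (finRotate 3)⁻¹ * (swap 1 2)⁻¹ = finRotate 3 by decide] at h
    exact (card_squaresWithAuto_le_conj_swapColEntry g).trans
      (card_squaresWithAuto_le_of_isParatopism_finRotate hn h)

theorem card_latinSquares_with_nontrivial_auto_le {n : ℕ} (hn : 4 ≤ n) :
    Nat.card {L : Fin n → Fin n → Fin n // IsLatinSquare n L ∧
      ∃ g : Perm (RCE n), g ≠ 1 ∧ IsLatinAuto n L g} ≤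
      6 * n.factorial ^ 3 * n ^ (5 * n ^ 2 / 8) := by
  set P : Finset (Perm (RCE n)) := {g | g ≠ 1 ∧ ∃ σ, IsParatopism n σ g}
  calc _ ≤ Nat.card (P.biUnion (squaresWithAuto n) : Set (Fin n → Fin n → Fin n)) :=
        Nat.card_mono (s := {L | IsLatinSquare n L ∧ ∃ g, g ≠ 1 ∧ IsLatinAuto n L g})
          (finite_toSet _) fun L ⟨hL, g, hg, hA⟩ => mem_biUnion.2
            ⟨g, mem_filter.2 ⟨mem_univ _, hg, hA.1⟩, mem_filter.2 ⟨mem_univ _, hL, hA⟩⟩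
    _ ≤ #P * n ^ (5 * n ^ 2 / 8) := by
        rw [Nat.card_coe_set_eq, Set.ncard_coe_finset]
        exact card_biUnion_le_card_mul _ _ _ fun g hg =>
          card_squaresWithAuto_le hn (mem_filter.1 hg).2.1 (mem_filter.1 hg).2.2.choose_spec
    _ ≤ 6 * n.factorial ^ 3 * n ^ (5 * n ^ 2 / 8) := by
        gcongr
        exact (card_le_card fun g hg => mem_filter.2 ⟨mem_univ _, (mem_filter.1 hg).2.2⟩).trans
          (card_paratopisms_le n)

/-- For `n ≥ 4`, the number of Latin squares of order `n` admitting at least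
one non-identity automorphism is at most `6 (n!)³ n ^ (5n²/8)`. -/
theorem count_latin_squares_with_nontrivial_auto (n : ℕ) (hn : 4 ≤ n) :
    (Nat.card {L : Fin n → Fin n → Fin n // IsLatinSquare n L ∧
        ∃ g : Equiv.Perm (Fin n ⊕ Fin n ⊕ Fin n), g ≠ 1 ∧ IsLatinAuto n L g} : ℝ) ≤
      6 * (n.factorial : ℝ) ^ 3 * (n : ℝ) ^ (5 * (n : ℝ) ^ 2 / 8) := by
  have hpow : (n : ℝ) ^ (5 * n ^ 2 / 8 : ℕ) ≤ (n : ℝ) ^ (5 * (n : ℝ) ^ 2 / 8) := by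
    rw [← Real.rpow_natCast]
    refine Real.rpow_le_rpow_of_exponent_le (by exact_mod_cast (show 1 ≤ n by omega)) ?_
    exact_mod_cast Nat.cast_div_le
  calc _ ≤ ((6 * n.factorial ^ 3 * n ^ (5 * n ^ 2 / 8) : ℕ) : ℝ) := by
        exact_mod_cast card_latinSquares_with_nontrivial_auto_le hn
    _ ≤ _ := by
      push_cast
      exact mul_le_mul_of_nonneg_left hpow (by positivity)
end

section
/- Let g be a non-identity automorphism of a Steiner triple system on n points. Then the number m of points fixed by g satisfies m ≤ (n−1)/2. -/
/-- A Steiner triple system on the point set `Fin n`: a collection of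
3-element blocks such that every 2-element subset of points lies in exactly
one block. -/
def IsSTS (n : ℕ) (B : Finset (Finset (Fin n))) : Prop :=
  (∀ b ∈ B, b.card = 3) ∧
  ∀ p : Finset (Fin n), p.card = 2 → ∃! b, b ∈ B ∧ p ⊆ b

/-- `g` is an automorphism of the Steiner triple system `B`: the image of
every block is a block. -/
def IsSTSAuto (n : ℕ) (B : Finset (Finset (Fin n))) (g : Equiv.Perm (Fin n)) : Prop :=
  ∀ b ∈ B, b.image g ∈ B

/-- A non-identity automorphism of a Steiner triple system on `n` points fixes
at most `(n - 1) / 2` points. -/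
theorem sts_auto_fixed_points_bound (n : ℕ) (B : Finset (Finset (Fin n)))
    (hB : IsSTS n B) (g : Equiv.Perm (Fin n)) (hg : IsSTSAuto n B g)
    (hg1 : g ≠ 1) (m : ℕ)
    (hm : (Finset.univ.filter fun x => g x = x).card = m) :
    (m : ℝ) ≤ ((n : ℝ) - 1) / 2 := by
  classical
  obtain ⟨y, hy⟩ : ∃ y, g y ≠ y := by
    by_contra h
    push_neg at h
    exact hg1 (Equiv.ext fun x => by simpa using h x)
  set F := Finset.univ.filter fun x => g x = x with hF
  have hyF : y ∉ F := by simp [hF, hy]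
  have hmemF : ∀ x, x ∈ F ↔ g x = x := by intro x; simp [hF]
  have pair_card : ∀ a b : Fin n, a ≠ b → ({a, b} : Finset (Fin n)).card = 2 := by
    intro a b hab
    rw [Finset.card_insert_of_notMem (by simp [hab]), Finset.card_singleton]
  -- main : every fixed point x has a "third point" z of the block through {x,y},
  -- and z is neither fixed nor y
  have main : ∀ x : Fin n, ∃ z, x ∈ F →
      (z ∉ F ∧ z ≠ y ∧ z ≠ x ∧ ∀ b ∈ B, x ∈ b → y ∈ b → z ∈ b) := by
    intro x
    by_cases hx : x ∈ F
    · have hgx : g x = x := (hmemF x).1 hx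
      have hxy : x ≠ y := fun h => hy (h ▸ hgx)
      obtain ⟨b, ⟨hbB, hsub⟩, huniq⟩ := hB.2 {x, y} (pair_card x y hxy)
      have hb3 : b.card = 3 := hB.1 b hbB
      have hxb : x ∈ b := hsub (by simp)
      have hyb : y ∈ b := hsub (by simp)
      have hcd : (b \ {x, y}).card = 1 := by
        rw [Finset.card_sdiff_of_subset hsub, hb3, pair_card x y hxy]
      obtain ⟨z, hz⟩ := Finset.card_eq_one.1 hcd
      have hzmem : z ∈ b \ ({x, y} : Finset (Fin n)) := by rw [hz]; simp
      have hzb : z ∈ b := (Finset.mem_sdiff.1 hzmem).1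
      have hzxy : z ≠ x ∧ z ≠ y := by
        have := (Finset.mem_sdiff.1 hzmem).2
        simp at this
        exact this
      refine ⟨z, fun _ => ?_⟩
      have hbeq : b = {x, y, z} := by
        refine (Finset.eq_of_subset_of_card_le ?_ ?_).symm
        · intro w hw
          simp at hw
          rcases hw with rfl | rfl | rfl
          exacts [hxb, hyb, hzb]
        · rw [hb3, Finset.card_eq_three.2
            ⟨x, y, z, hxy, fun h => hzxy.1 h.symm, fun h => hzxy.2 h.symm, rfl⟩]
      have hzF : z ∉ F := by
        intro hzF
        have hgz : g z = z := (hmemF z).1 hzF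
        have himg : b.image g ∈ B := hg b hbB
        have hxz : x ≠ z := fun h => hzxy.1 h.symm
        obtain ⟨b', ⟨_, _⟩, huniq'⟩ := hB.2 {x, z} (pair_card x z hxz)
        have h1 : b.image g = b' := huniq' _ ⟨himg, Finset.insert_subset_iff.2
          ⟨Finset.mem_image.2 ⟨x, hxb, hgx⟩,
           Finset.singleton_subset_iff.2 (Finset.mem_image.2 ⟨z, hzb, hgz⟩)⟩⟩
        have h2 : b = b' := huniq' _ ⟨hbB, Finset.insert_subset_iff.2
          ⟨hxb, Finset.singleton_subset_iff.2 hzb⟩⟩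
        have hgyb : g y ∈ b := (h1.trans h2.symm) ▸ Finset.mem_image.2 ⟨y, hyb, rfl⟩
        rw [hbeq] at hgyb
        simp at hgyb
        rcases hgyb with h | h | h
        · exact hxy (g.injective (by rw [h, hgx])).symm
        · exact hy h
        · exact hzxy.2 (g.injective (by rw [h, hgz])).symm
      refine ⟨hzF, hzxy.2, hzxy.1, fun b' hb'B hxb' hyb' => ?_⟩
      have hb'b : b' = b := huniq b' ⟨hb'B, Finset.insert_subset_iff.2
        ⟨hxb', Finset.singleton_subset_iff.2 hyb'⟩⟩
      exact hb'b ▸ hzb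
    · exact ⟨y, fun h => absurd h hx⟩
  choose f hf using main
  -- f is an injection from F into univ \ insert y F
  have hcard : F.card ≤ (Finset.univ \ insert y F).card := by
    apply Finset.card_le_card_of_injOn f
    · intro x hx
      obtain ⟨hzF, hzy, _, _⟩ := hf x hx
      simp [Finset.mem_sdiff, hzy, hzF]
    · intro x1 hx1 x2 hx2 heq
      simp only [Finset.mem_coe] at hx1 hx2
      obtain ⟨hz1F, hz1y, hz1x, hz1⟩ := hf x1 hx1
      obtain ⟨hz2F, hz2y, hz2x, hz2⟩ := hf x2 hx2
      set z := f x1 with hzdef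
      have hzy : z ≠ y := hz1y
      obtain ⟨c, ⟨hcB, hcsub⟩, hcuniq⟩ := hB.2 {y, z} (pair_card y z (fun h => hzy h.symm))
      have hc3 : c.card = 3 := hB.1 c hcB
      -- the block through {x1, y} contains z, hence is the block through {y, z}
      have hx1y : x1 ≠ y := fun h => hy (h ▸ (hmemF x1).1 hx1)
      have hx2y : x2 ≠ y := fun h => hy (h ▸ (hmemF x2).1 hx2)
      obtain ⟨b1, ⟨hb1B, hb1sub⟩, _⟩ := hB.2 {x1, y} (pair_card x1 y hx1y)
      obtain ⟨b2, ⟨hb2B, hb2sub⟩, _⟩ := hB.2 {x2, y} (pair_card x2 y hx2y)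
      have hzb1 : z ∈ b1 := hz1 b1 hb1B (hb1sub (by simp)) (hb1sub (by simp))
      have hzb2 : f x2 ∈ b2 := hz2 b2 hb2B (hb2sub (by simp)) (hb2sub (by simp))
      rw [← heq] at hzb2
      have hb1c : b1 = c := hcuniq b1 ⟨hb1B, Finset.insert_subset_iff.2
        ⟨hb1sub (by simp), Finset.singleton_subset_iff.2 hzb1⟩⟩
      have hb2c : b2 = c := hcuniq b2 ⟨hb2B, Finset.insert_subset_iff.2
        ⟨hb2sub (by simp), Finset.singleton_subset_iff.2 hzb2⟩⟩
      -- x1, x2 ∈ c \ {y, z}, which has exactly one element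
      have hcd : (c \ {y, z}).card = 1 := by
        rw [Finset.card_sdiff_of_subset hcsub, hc3, pair_card y z (fun h => hzy h.symm)]
      obtain ⟨a, ha⟩ := Finset.card_eq_one.1 hcd
      have hx1c : x1 ∈ c \ ({y, z} : Finset (Fin n)) := by
        rw [Finset.mem_sdiff]
        refine ⟨hb1c ▸ hb1sub (by simp), ?_⟩
        simp only [Finset.mem_insert, Finset.mem_singleton]
        push_neg
        exact ⟨hx1y, fun h => hz1x (hzdef.symm.trans h.symm)⟩
      have hx2c : x2 ∈ c \ ({y, z} : Finset (Fin n)) := by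
        rw [Finset.mem_sdiff]
        refine ⟨hb2c ▸ hb2sub (by simp), ?_⟩
        simp only [Finset.mem_insert, Finset.mem_singleton]
        push_neg
        exact ⟨hx2y, fun h => hz2x (heq.symm.trans h.symm)⟩
      rw [ha, Finset.mem_singleton] at hx1c hx2c
      rw [hx1c, hx2c]
  have hins : (insert y F).card = m + 1 := by
    rw [Finset.card_insert_of_notMem hyF, hm]
  have hsd : (Finset.univ \ insert y F).card = n - (m + 1) := by
    rw [Finset.card_sdiff_of_subset (Finset.subset_univ _), hins, Finset.card_univ, Fintype.card_fin]
  have hle : m + 1 ≤ n := by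
    have := Finset.card_le_univ (insert y F)
    rw [hins, Fintype.card_fin] at this
    exact this
  rw [hm, hsd] at hcard
  have h2m : 2 * m + 1 ≤ n := by omega
  have : (2 * m + 1 : ℝ) ≤ n := by exact_mod_cast h2m
  linarith
end

section
/- Let g be a non-identity permutation of a point set X of size n. Then the number of Steiner triple systems on X admitting g as an automorphism is at most (8ne/5)^{5n²/48}. -/
/-!
Reveal a `⟨g⟩`-invariant system one block orbit at a time: run through all pairs of points and, at
each pair not yet covered by a revealed block, record the third point of its block and reveal the
orbit of that block. The system can be read back from the record, whose length is the number `T`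
of block orbits, so there are at most `n ^ T` such systems.

An orbit of size one is a block fixed by `g`. Such a block is either fixed pointwise (at most
`f(f-1)/6` of these, `f` the number of fixed points) or contains a moved point `x` together with
`g x` (at most `m/2` of these, `m` the number of moved points), so
`2T ≤ n(n-1)/6 + f(f-1)/6 + m/2`. Since `g ≠ 1`, each block through a moved point contains at most
one fixed point, whence `2f < n`, and altogether `48T ≤ 5n² + 4n + 3`. Finally `n ≤ e^(n-1)` turns
`n ^ T` into the stated bound.
-/

open Finset Pointwise

theorem Equiv.Perm.support_nonempty_of_ne_one {α : Type*} [Fintype α] [DecidableEq α]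
    {σ : Equiv.Perm α} (hσ : σ ≠ 1) : σ.support.Nonempty :=
  nonempty_iff_ne_empty.2 (mt support_eq_empty_iff.1 hσ)

theorem Nat.card_subtype_le_pow_of_decode {α β : Type*} [Fintype β] {P : α → Prop}
    (decode : List β → α) (L : ℕ) (h : ∀ x, P x → ∃ s : List β, s.length = L ∧ decode s = x) :
    Nat.card {x // P x} ≤ Fintype.card β ^ L := by
  choose code hlen hdecode using fun x : {x // P x} => h x x.2
  have hinj : Function.Injective fun x => (⟨code x, hlen x⟩ : List.Vector β L) :=
    fun x y hxy => Subtype.ext <| by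
      rw [← hdecode x, ← hdecode y]
      exact congrArg (decode ∘ Subtype.val) hxy
  calc Nat.card {x // P x} ≤ Nat.card (List.Vector β L) := Nat.card_le_card_of_injective _ hinj
    _ = Fintype.card β ^ L := by rw [Nat.card_eq_fintype_card, card_vector]

section ZPowersOrbit

variable {G X : Type*} [Group G] [MulAction G X] {g : G}

abbrev zpowersOrbit (g : G) (x : X) : MulAction.orbitRel.Quotient (Subgroup.zpowers g) X :=
  Quotient.mk'' x

theorem zpowersOrbit_smul (g : G) (x : X) : zpowersOrbit g (g • x) = zpowersOrbit g x :=
  Quotient.sound (MulAction.mem_orbit x (⟨g, Subgroup.mem_zpowers g⟩ : Subgroup.zpowers g))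

theorem Finset.mem_of_zpowersOrbit_eq {s : Finset X} (hs : ∀ x ∈ s, g • x ∈ s) {x y : X}
    (hx : x ∈ s) (hxy : zpowersOrbit g y = zpowersOrbit g x) : y ∈ s := by
  classical
  have hgs : g • s = s := eq_of_subset_of_card_le
    (fun y hy => by obtain ⟨z, hz, rfl⟩ := mem_smul_finset.1 hy; exact hs z hz)
    (card_smul_finset g s).ge
  have hstab : Subgroup.zpowers g ≤ MulAction.stabilizer G s := Subgroup.zpowers_le.2 hgs
  obtain ⟨⟨h, hh⟩, rfl⟩ := MulAction.orbitRel_apply.1 (Quotient.exact hxy)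
  exact (hstab hh : h • s = s) ▸ smul_mem_smul_finset hx

/-- Orbits of size one consist of a fixed point; all others contribute at least two elements. -/
theorem two_mul_card_image_zpowersOrbit_le [DecidableEq X]
    [DecidableEq (MulAction.orbitRel.Quotient (Subgroup.zpowers g) X)] {s : Finset X}
    (hs : ∀ x ∈ s, g • x ∈ s) :
    2 * #(s.image (zpowersOrbit g)) ≤ #s + #{x ∈ s | g • x = x} := by
  have hmaps {t : Finset X} (ht : t ⊆ s) :
      Set.MapsTo (zpowersOrbit g) (t : Set X) ↑(s.image (zpowersOrbit g)) :=
    fun _ hx => mem_coe.2 (mem_image_of_mem _ (ht (mem_coe.1 hx)))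
  rw [card_eq_sum_card_fiberwise (hmaps subset_rfl),
    card_eq_sum_card_fiberwise (hmaps (filter_subset _ s)), ← sum_add_distrib, mul_comm,
    ← smul_eq_mul, ← sum_const]
  refine sum_le_sum fun o ho => ?_
  obtain ⟨x, hx, rfl⟩ := mem_image.1 ho
  by_cases hgx : g • x = x
  · have h₁ : 0 < #{y ∈ s | zpowersOrbit g y = zpowersOrbit g x} :=
      card_pos.2 ⟨x, by simp [hx]⟩
    have h₂ : 0 < #{y ∈ {y ∈ s | g • y = y} | zpowersOrbit g y = zpowersOrbit g x} :=
      card_pos.2 ⟨x, by simp [hx, hgx]⟩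
    omega
  · have : 1 < #{y ∈ s | zpowersOrbit g y = zpowersOrbit g x} :=
      one_lt_card.2 ⟨g • x, by simp [hs x hx, zpowersOrbit_smul], x, by simp [hx], hgx⟩
    omega

end ZPowersOrbit

section BlockOrbits

variable {n : ℕ}

abbrev BlockOrbit (g : Equiv.Perm (Fin n)) :=
  MulAction.orbitRel.Quotient (Subgroup.zpowers g) (Finset (Fin n))

open Classical in
noncomputable def decodeOrbits (g : Equiv.Perm (Fin n)) :
    List (Finset (Fin n)) → List (Fin n) → Finset (BlockOrbit g) → Finset (BlockOrbit g)
  | [], _, D => D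
  | p :: ps, s, D =>
    if ∃ c, zpowersOrbit g c ∈ D ∧ p ⊆ c then decodeOrbits g ps s D
    else
      match s with
      | [] => D
      | z :: s => decodeOrbits g ps s (insert (zpowersOrbit g (insert z p)) D)

end BlockOrbits

namespace IsSTSAuto

variable {n : ℕ} {B : Finset (Finset (Fin n))} {g : Equiv.Perm (Fin n)}

theorem smul_mem (hg : IsSTSAuto n B g) {b : Finset (Fin n)} (hb : b ∈ B) :
    g • b ∈ B := by
  simpa [smul_finset_def] using hg b hb

open Classical in
theorem mem_of_zpowersOrbit_mem (hg : IsSTSAuto n B g)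
    {D : Finset (BlockOrbit g)} (hD : D ⊆ B.image (zpowersOrbit g)) {c : Finset (Fin n)}
    (hc : zpowersOrbit g c ∈ D) : c ∈ B := by
  obtain ⟨b, hb, hbc⟩ := mem_image.1 (hD hc)
  exact B.mem_of_zpowersOrbit_eq (fun b hb => hg.smul_mem hb) hb hbc.symm

end IsSTSAuto

namespace IsSTS

variable {n : ℕ} {B : Finset (Finset (Fin n))} {g : Equiv.Perm (Fin n)}

theorem eq_of_subset (hB : IsSTS n B) {p b c : Finset (Fin n)} (hp : #p = 2) (hb : b ∈ B)
    (hc : c ∈ B) (hpb : p ⊆ b) (hpc : p ⊆ c) : b = c :=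
  (hB.2 p hp).unique ⟨hb, hpb⟩ ⟨hc, hpc⟩

theorem eq_of_mem_of_mem (hB : IsSTS n B) {x y : Fin n} (hxy : x ≠ y) {b c : Finset (Fin n)}
    (hb : b ∈ B) (hc : c ∈ B) (hxb : x ∈ b) (hyb : y ∈ b) (hxc : x ∈ c) (hyc : y ∈ c) : b = c :=
  hB.eq_of_subset (card_pair hxy) hb hc (insert_subset hxb (singleton_subset_iff.2 hyb))
    (insert_subset hxc (singleton_subset_iff.2 hyc))

theorem exists_mem_of_ne (hB : IsSTS n B) {x y : Fin n} (hxy : x ≠ y) :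
    ∃ b ∈ B, x ∈ b ∧ y ∈ b := by
  obtain ⟨b, ⟨hb, hxyb⟩, -⟩ := hB.2 {x, y} (card_pair hxy)
  exact ⟨b, hb, insert_subset_iff.1 hxyb |>.1, singleton_subset_iff.1 (insert_subset_iff.1 hxyb).2⟩

theorem three_le (hB : IsSTS n B) {x y : Fin n} (hxy : x ≠ y) : 3 ≤ n := by
  obtain ⟨b, hb, -⟩ := hB.exists_mem_of_ne hxy
  simpa [hB.1 b hb] using card_le_univ b

/-- Each block covers three pairs of points of `V`, and no pair is covered twice. -/
theorem three_mul_card_le_choose (hB : IsSTS n B) {S : Finset (Finset (Fin n))} (hS : S ⊆ B)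
    {V : Finset (Fin n)} (hV : ∀ b ∈ S, b ⊆ V) : 3 * #S ≤ (#V).choose 2 := by
  have := card_mul_le_card_mul (fun b p => p ⊆ b) (s := S) (t := V.powersetCard 2) (m := 3)
    (n := 1) (fun b hb => ?_) (fun p hp => ?_)
  · simpa [card_powersetCard, mul_comm] using this
  · calc 3 = #(b.powersetCard 2) := by rw [card_powersetCard, hB.1 b (hS hb)]; rfl
      _ ≤ _ := card_le_card fun p hp => by
        rw [mem_powersetCard] at hp
        exact mem_bipartiteAbove _ |>.2 ⟨mem_powersetCard.2 ⟨hp.1.trans (hV b hb), hp.2⟩, hp.1⟩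
  · refine card_le_one.2 fun b hb c hc => ?_
    rw [mem_bipartiteBelow] at hb hc
    exact hB.eq_of_subset (mem_powersetCard.1 hp).2 (hS hb.1) (hS hc.1) hb.2 hc.2

theorem three_mul_card_le (hB : IsSTS n B) : 3 * #B ≤ n.choose 2 := by
  simpa using hB.three_mul_card_le_choose subset_rfl fun b _ => subset_univ b

/-- The block through two fixed points is mapped to itself, so its third point is fixed too. -/
theorem apply_eq_self_of_fixes_two (hB : IsSTS n B) (hg : IsSTSAuto n B g) {b : Finset (Fin n)}
    (hb : b ∈ B) {u v x : Fin n} (huv : u ≠ v) (hu : u ∈ b) (hv : v ∈ b) (hgu : g u = u)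
    (hgv : g v = v) (hx : x ∈ b) : g x = x := by
  have hgb : b.image g = b := hB.eq_of_mem_of_mem huv (hg b hb) hb
    (hgu ▸ mem_image_of_mem g hu) (hgv ▸ mem_image_of_mem g hv) hu hv
  have hgxb : g x ∈ b := hgb ▸ mem_image_of_mem g hx
  have hthird : #(b \ {u, v}) ≤ 1 := by
    rw [card_sdiff_of_subset (insert_subset hu (singleton_subset_iff.2 hv)), hB.1 b hb,
      card_pair huv]
  by_contra hgx
  have hxuv : x ∉ ({u, v} : Finset (Fin n)) := by
    simp only [mem_insert, mem_singleton, not_or]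
    exact ⟨fun h => hgx (h ▸ hgu), fun h => hgx (h ▸ hgv)⟩
  have hgxuv : g x ∉ ({u, v} : Finset (Fin n)) := by
    simp only [mem_insert, mem_singleton, not_or] at hxuv ⊢
    exact ⟨fun h => hxuv.1 (g.injective (h.trans hgu.symm)),
      fun h => hxuv.2 (g.injective (h.trans hgv.symm))⟩
  exact hgx (card_le_one.1 hthird _ (mem_sdiff.2 ⟨hgxb, hgxuv⟩) _ (mem_sdiff.2 ⟨hx, hxuv⟩))

theorem two_mul_card_filter_mem_lt (hB : IsSTS n B) (x : Fin n) : 2 * #{b ∈ B | x ∈ b} < n := by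
  have h := card_mul_le_card_mul (fun b y => y ∈ b) (s := {b ∈ B | x ∈ b}) (t := univ.erase x)
    (m := 2) (n := 1) (fun b hb => ?_) (fun y hy => ?_)
  · rw [card_erase_of_mem (mem_univ x), card_univ, Fintype.card_fin] at h
    have := x.pos
    omega
  · rw [mem_filter] at hb
    calc 2 = #(b.erase x) := by rw [card_erase_of_mem hb.2, hB.1 b hb.1]
      _ ≤ _ := card_le_card fun y hy =>
        mem_bipartiteAbove _ |>.2
          ⟨mem_erase.2 ⟨ne_of_mem_erase hy, mem_univ y⟩, mem_of_mem_erase hy⟩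
  · refine card_le_one.2 fun b hb c hc => ?_
    simp only [mem_bipartiteBelow, mem_filter] at hb hc
    exact hB.eq_of_mem_of_mem (ne_of_mem_erase hy).symm hb.1.1 hc.1.1 hb.1.2 hb.2 hc.1.2 hc.2

/-- Each block through a moved point contains at most one fixed point. -/
theorem two_mul_card_compl_support_lt (hB : IsSTS n B) (hg : IsSTSAuto n B g) (hg1 : g ≠ 1) :
    2 * #g.supportᶜ < n := by
  obtain ⟨x, hx⟩ := g.support_nonempty_of_ne_one hg1
  have hgx : g x ≠ x := Equiv.Perm.mem_support.1 hx
  have hfixed : #g.supportᶜ ≤ #{b ∈ B | x ∈ b} := by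
    refine card_le_card_of_forall_subsingleton (· ∈ ·) (fun u hu => ?_) (fun b hb => ?_)
    · have hgu : g u = u := by simpa using hu
      obtain ⟨b, hb, hxb, hub⟩ := hB.exists_mem_of_ne (fun h : x = u => hgx (h ▸ hgu))
      exact ⟨b, mem_filter.2 ⟨hb, hxb⟩, hub⟩
    · rintro u ⟨hu, hub⟩ v ⟨hv, hvb⟩
      by_contra huv
      rw [mem_filter] at hb
      exact hgx <| hB.apply_eq_self_of_fixes_two hg hb.1 huv hub hvb (by simpa using hu)
        (by simpa using hv) hb.2
  have := hB.two_mul_card_filter_mem_lt x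
  omega

/-- A block mapped to itself that contains a moved point `x` also contains `g x`, and the moved
points of distinct such blocks are disjoint. -/
theorem two_mul_card_smul_eq_self_le (hB : IsSTS n B) :
    2 * #{b ∈ B | g • b = b ∧ ¬b ⊆ g.supportᶜ} ≤ #g.support := by
  have hgb {b : Finset (Fin n)} {x : Fin n} (hb : g • b = b) (hx : x ∈ b) : g x ∈ b :=
    hb ▸ smul_mem_smul_finset (a := g) hx
  have := card_mul_le_card_mul (fun b x => x ∈ b) (s := {b ∈ B | g • b = b ∧ ¬b ⊆ g.supportᶜ})
    (t := g.support) (m := 2) (n := 1) (fun b hb => ?_) (fun x hx => ?_)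
  · simpa [mul_comm] using this
  · obtain ⟨-, hgb', hmoved⟩ := mem_filter.1 hb
    obtain ⟨x, hxb, hx⟩ := not_subset.1 hmoved
    rw [mem_compl, not_not] at hx
    have hgx : g x ≠ x := Equiv.Perm.mem_support.1 hx
    calc 2 = #{g x, x} := (card_pair hgx).symm
      _ ≤ _ := card_le_card <| insert_subset
        (mem_bipartiteAbove _ |>.2 ⟨Equiv.Perm.apply_mem_support.2 hx, hgb hgb' hxb⟩)
        (singleton_subset_iff.2 (mem_bipartiteAbove _ |>.2 ⟨hx, hxb⟩))
  · refine card_le_one.2 fun b hb c hc => ?_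
    simp only [mem_bipartiteBelow, mem_filter] at hb hc
    exact hB.eq_of_mem_of_mem (Equiv.Perm.mem_support.1 hx).symm hb.1.1 hc.1.1 hb.2
      (hgb hb.1.2.1 hb.2) hc.2 (hgb hc.1.2.1 hc.2)

open Classical in
theorem card_image_zpowersOrbit_le (hB : IsSTS n B) (hg : IsSTSAuto n B g) (hg1 : g ≠ 1) :
    48 * #(B.image (zpowersOrbit g)) ≤ 5 * n ^ 2 + 4 * n + 3 := by
  obtain ⟨x, hx⟩ := g.support_nonempty_of_ne_one hg1
  have hn : 3 ≤ n := hB.three_le (Equiv.Perm.mem_support.1 hx)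
  have hfixed : #{b ∈ B | g • b = b} ≤
      #{b ∈ B | b ⊆ g.supportᶜ} + #{b ∈ B | g • b = b ∧ ¬b ⊆ g.supportᶜ} :=
    (card_le_card fun b hb => by by_cases hbf : b ⊆ g.supportᶜ <;> simp_all).trans
      (card_union_le _ _)
  have horbits := (two_mul_card_image_zpowersOrbit_le fun b hb => hg.smul_mem hb).trans
    (Nat.add_le_add_left hfixed _)
  have hpointwise := hB.three_mul_card_le_choose (filter_subset (· ⊆ g.supportᶜ) B)
    fun b hb => (mem_filter.1 hb).2
  have hsetwise := hB.two_mul_card_smul_eq_self_le (g := g)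
  have hall := hB.three_mul_card_le
  have hf : 2 * #g.supportᶜ + 1 ≤ n := hB.two_mul_card_compl_support_lt hg hg1
  have hfm := card_compl_add_card g.support
  rw [Fintype.card_fin] at hfm
  rify at hn horbits hpointwise hsetwise hall hf hfm ⊢
  rw [Nat.cast_choose_two] at hpointwise hall
  have hf₀ : (0 : ℝ) ≤ #g.supportᶜ := Nat.cast_nonneg _
  nlinarith [mul_nonneg hf₀ (sub_nonneg.2 hf), mul_nonneg (sub_nonneg.2 hf) (sub_nonneg.2 hn)]

open Classical in
theorem exists_decodeOrbits_eq [NeZero n] (hB : IsSTS n B) (hg : IsSTSAuto n B g)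
    (ps : List (Finset (Fin n))) (hps : ∀ p ∈ ps, #p = 2) (D : Finset (BlockOrbit g))
    (hD : D ⊆ B.image (zpowersOrbit g)) (hcov : ∀ b ∈ B, zpowersOrbit g b ∈ D ∨ ∃ p ∈ ps, p ⊆ b)
    (L : ℕ) (hL : #(B.image (zpowersOrbit g)) ≤ L + #D) :
    ∃ s : List (Fin n), s.length = L ∧ decodeOrbits g ps s D = B.image (zpowersOrbit g) := by
  induction ps generalizing D L with
  | nil =>
    refine ⟨List.replicate L 0, List.length_replicate, hD.antisymm fun o ho => ?_⟩
    obtain ⟨b, hb, rfl⟩ := mem_image.1 ho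
    simpa using hcov b hb
  | cons p ps ih =>
    have hp : #p = 2 := hps p List.mem_cons_self
    have hps' : ∀ q ∈ ps, #q = 2 := fun q hq => hps q (List.mem_cons_of_mem p hq)
    by_cases hcovered : ∃ c, zpowersOrbit g c ∈ D ∧ p ⊆ c
    · obtain ⟨c, hcD, hpc⟩ := hcovered
      have hcov' (b) (hb : b ∈ B) : zpowersOrbit g b ∈ D ∨ ∃ q ∈ ps, q ⊆ b := by
        rcases hcov b hb with hbD | ⟨q, hq, hqb⟩
        · exact .inl hbD
        rcases List.mem_cons.1 hq with rfl | hq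
        · exact .inl (hB.eq_of_subset hp hb (hg.mem_of_zpowersOrbit_mem hD hcD) hqb hpc ▸ hcD)
        · exact .inr ⟨q, hq, hqb⟩
      obtain ⟨s, hs, hdecode⟩ := ih hps' D hD hcov' L hL
      exact ⟨s, hs, by cases s <;> rw [decodeOrbits, if_pos ⟨c, hcD, hpc⟩, hdecode]⟩
    · obtain ⟨b, ⟨hb, hpb⟩, -⟩ := hB.2 p hp
      obtain ⟨z, -, rfl⟩ := exists_eq_insert_iff.2 ⟨hpb, by rw [hp, hB.1 _ hb]⟩
      have hnew : zpowersOrbit g (insert z p) ∉ D := fun h => hcovered ⟨_, h, subset_insert z p⟩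
      have hD' : insert (zpowersOrbit g (insert z p)) D ⊆ B.image (zpowersOrbit g) :=
        insert_subset (mem_image_of_mem _ hb) hD
      have hcard := card_le_card hD'
      rw [card_insert_of_notMem hnew] at hcard
      obtain ⟨L, rfl⟩ := Nat.exists_eq_add_one.2 (by omega : 0 < L)
      have hcov' (b') (hb' : b' ∈ B) :
          zpowersOrbit g b' ∈ insert (zpowersOrbit g (insert z p)) D ∨ ∃ q ∈ ps, q ⊆ b' := by
        rcases hcov b' hb' with hbD | ⟨q, hq, hqb⟩
        · exact .inl (mem_insert_of_mem hbD)
        rcases List.mem_cons.1 hq with rfl | hq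
        · exact .inl (hB.eq_of_subset hp hb' hb hqb hpb ▸ mem_insert_self _ D)
        · exact .inr ⟨q, hq, hqb⟩
      obtain ⟨s, hs, hdecode⟩ := ih hps' _ hD' hcov' L (by rw [card_insert_of_notMem hnew]; omega)
      exact ⟨z :: s, by rw [List.length_cons, hs], by rw [decodeOrbits, if_neg hcovered, hdecode]⟩

open Classical in
theorem card_le_pow (hg1 : g ≠ 1) :
    Nat.card {B // IsSTS n B ∧ IsSTSAuto n B g} ≤ n ^ ((5 * n ^ 2 + 4 * n + 3) / 48) := by
  obtain ⟨x, -⟩ := g.support_nonempty_of_ne_one hg1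
  have : NeZero n := ⟨x.pos.ne'⟩
  set pairs : List (Finset (Fin n)) := (univ.powersetCard 2).toList
  have hpairs : ∀ p ∈ pairs, #p = 2 := fun p hp => (mem_powersetCard.1 (mem_toList.1 hp)).2
  have hcov {b : Finset (Fin n)} (hb : 2 ≤ #b) : ∃ p ∈ pairs, p ⊆ b := by
    obtain ⟨p, hpb, hp⟩ := exists_subset_card_eq hb
    exact ⟨p, mem_toList.2 (mem_powersetCard.2 ⟨subset_univ p, hp⟩), hpb⟩
  have hdecode (B : Finset (Finset (Fin n))) (hB : IsSTS n B) (hg : IsSTSAuto n B g) :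
      ∃ s : List (Fin n), s.length = (5 * n ^ 2 + 4 * n + 3) / 48 ∧
        univ.filter (fun b => zpowersOrbit g b ∈ decodeOrbits g pairs s ∅) = B := by
    have hL : #(B.image (zpowersOrbit g)) ≤
        (5 * n ^ 2 + 4 * n + 3) / 48 + #(∅ : Finset (BlockOrbit g)) :=
      (Nat.le_div_iff_mul_le (by norm_num)).2
        (mul_comm 48 _ ▸ hB.card_image_zpowersOrbit_le hg hg1)
    obtain ⟨s, hs, hdecode⟩ := hB.exists_decodeOrbits_eq hg pairs hpairs ∅ (empty_subset _)
      (fun b hb => .inr (hcov (by rw [hB.1 b hb]; norm_num))) _ hL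
    refine ⟨s, hs, ?_⟩
    ext b
    rw [hdecode, mem_filter, mem_image]
    exact ⟨fun ⟨_, c, hc, hcb⟩ => B.mem_of_zpowersOrbit_eq (fun _ hb => hg.smul_mem hb) hc hcb.symm,
      fun hb => ⟨mem_univ b, b, hb, rfl⟩⟩
  refine (Nat.card_subtype_le_pow_of_decode _ _ fun B hB => hdecode B hB.1 hB.2).trans_eq ?_
  rw [Fintype.card_fin]

end IsSTS

open Real in
/-- `n ≤ e ^ (n - 1)` absorbs the lower-order part `(4n + 3) / 48` of the exponent. -/
theorem pow_le_rpow_of_mul_le {n L : ℕ} (hn : 1 ≤ n) (hL : 48 * L ≤ 5 * n ^ 2 + 4 * n + 3) :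
    (n : ℝ) ^ L ≤ (8 * n * exp 1 / 5) ^ (5 * (n : ℝ) ^ 2 / 48) := by
  set a : ℝ := 5 * (n : ℝ) ^ 2 / 48 with ha
  set b : ℝ := (4 * (n : ℝ) + 3) / 48 with hb
  have hn' : (1 : ℝ) ≤ n := by exact_mod_cast hn
  have hL' : (48 * L : ℝ) ≤ 5 * n ^ 2 + 4 * n + 3 := by exact_mod_cast hL
  have hnb : (n : ℝ) ^ b ≤ (8 * exp 1 / 5) ^ a := calc
    (n : ℝ) ^ b ≤ exp (n - 1) ^ b := by
      gcongr
      linarith [add_one_le_exp ((n : ℝ) - 1)]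
    _ = exp ((n - 1) * b) := (exp_mul _ _).symm
    _ ≤ exp a := exp_le_exp.2 (by rw [ha, hb]; nlinarith)
    _ = exp 1 ^ a := (exp_one_rpow a).symm
    _ ≤ (8 * exp 1 / 5) ^ a := by gcongr; linarith [exp_pos 1]
  calc (n : ℝ) ^ L = (n : ℝ) ^ (L : ℝ) := (rpow_natCast _ _).symm
    _ ≤ (n : ℝ) ^ (a + b) := rpow_le_rpow_of_exponent_le hn' (by rw [ha, hb]; linarith)
    _ = (n : ℝ) ^ a * (n : ℝ) ^ b := rpow_add (by linarith) _ _
    _ ≤ (n : ℝ) ^ a * (8 * exp 1 / 5) ^ a := by gcongr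
    _ = (8 * n * exp 1 / 5) ^ a := by
      rw [← mul_rpow (by positivity) (by positivity)]
      ring_nf

/-- A non-identity permutation `g` of an `n`-element point set is an
automorphism of at most `(8ne/5) ^ (5n²/48)` Steiner triple systems on that
set. -/
theorem count_sts_fixed_by_perm (n : ℕ) (g : Equiv.Perm (Fin n)) (hg1 : g ≠ 1) :
    (Nat.card {B : Finset (Finset (Fin n)) //
        IsSTS n B ∧ IsSTSAuto n B g} : ℝ) ≤
      (8 * (n : ℝ) * Real.exp 1 / 5) ^ (5 * (n : ℝ) ^ 2 / 48) := by
  obtain ⟨x, -⟩ := g.support_nonempty_of_ne_one hg1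
  calc (Nat.card {B // IsSTS n B ∧ IsSTSAuto n B g} : ℝ)
      ≤ (n : ℝ) ^ ((5 * n ^ 2 + 4 * n + 3) / 48) := by exact_mod_cast IsSTS.card_le_pow hg1
    _ ≤ _ := pow_le_rpow_of_mul_le x.pos (Nat.mul_div_le _ 48)
end

section
/- Let Γ be a k-regular simple graph on n vertices and let g be an automorphism of Γ with no fixed vertices. Then the number of 1-factors (perfect matchings) of Γ fixed setwise by g is at most (8ek)^{n/4}. -/
/-- A 1-factor (perfect matching) of a simple graph `G` on `Fin n`: a set of
edges of `G` such that every vertex lies in exactly one of them. -/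
def IsOneFactorOf (n : ℕ) (G : SimpleGraph (Fin n)) (M : Finset (Sym2 (Fin n))) : Prop :=
  (↑M ⊆ G.edgeSet) ∧ ∀ v : Fin n, ∃! e, e ∈ M ∧ v ∈ e

namespace OFaux

noncomputable section
open Classical Finset

variable {n : ℕ} {G : SimpleGraph (Fin n)} (g : G ≃g G)
variable (M : Finset (Sym2 (Fin n)))

/-- the underlying permutation -/
def pg : Equiv.Perm (Fin n) := RelIso.toEquiv g

variable {M}

/-- the partner function of a 1-factor -/
def pf (hM : ∀ v : Fin n, ∃! e, e ∈ M ∧ v ∈ e) (v : Fin n) : Fin n :=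
  Sym2.Mem.other (hM v).exists.choose_spec.2

variable (hM : ∀ v : Fin n, ∃! e, e ∈ M ∧ v ∈ e)

lemma pf_spec (v : Fin n) : s(v, pf hM v) ∈ M := by
  rw [pf, Sym2.other_spec]
  exact (hM v).exists.choose_spec.1

lemma pf_unique {v : Fin n} {e : Sym2 (Fin n)} (he : e ∈ M) (hv : v ∈ e) :
    e = s(v, pf hM v) := by
  exact (hM v).unique ⟨he, hv⟩ ⟨pf_spec hM v, Sym2.mem_mk_left _ _⟩

lemma pf_adj (hsub : ↑M ⊆ G.edgeSet) (v : Fin n) : G.Adj v (pf hM v) :=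
  (SimpleGraph.mem_edgeSet G).1 (hsub (pf_spec hM v))

lemma pf_ne (hsub : ↑M ⊆ G.edgeSet) (v : Fin n) : pf hM v ≠ v := (pf_adj hM hsub v).ne'

lemma pf_invol (hsub : ↑M ⊆ G.edgeSet) (v : Fin n) : pf hM (pf hM v) = v := by
  have h1 : s(v, pf hM v) = s(pf hM v, pf hM (pf hM v)) :=
    pf_unique hM (pf_spec hM v) (Sym2.mem_mk_right _ _)
  have : v ∈ s(pf hM v, pf hM (pf hM v)) := h1 ▸ Sym2.mem_mk_left _ _
  rcases Sym2.mem_iff.1 this with h | h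
  · exact absurd h.symm (pf_ne hM hsub v)
  · exact h.symm


lemma pf_equiv (hsub : ↑M ⊆ G.edgeSet) (hinv : M.image (Sym2.map g) = M) (v : Fin n) :
    pf hM (pg g v) = pg g (pf hM v) := by
  have h1 : Sym2.map g s(v, pf hM v) ∈ M := by
    have h0 : Sym2.map g s(v, pf hM v) ∈ M.image (Sym2.map g) :=
      Finset.mem_image_of_mem _ (pf_spec hM v)
    rwa [hinv] at h0
  rw [Sym2.map_pair_eq] at h1
  have h2 : s((g : Fin n → Fin n) v, g (pf hM v)) = s(g v, pf hM (g v)) :=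
    pf_unique hM h1 (Sym2.mem_mk_left _ _)
  have h3 : (g : Fin n → Fin n) (pf hM v) ∈ s(g v, pf hM (g v)) :=
    h2 ▸ Sym2.mem_mk_right _ _
  rcases Sym2.mem_iff.1 h3 with h | h
  · exact absurd (g.toEquiv.injective h) (pf_ne hM hsub v)
  · exact h.symm

lemma pf_pow (hsub : ↑M ⊆ G.edgeSet) (hinv : M.image (Sym2.map g) = M) (i : ℕ) (v : Fin n) :
    pf hM ((pg g ^ i) v) = (pg g ^ i) (pf hM v) := by
  induction i with
  | zero => simp
  | succ i ih =>
      rw [pow_succ', Equiv.Perm.mul_apply, Equiv.Perm.mul_apply,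
        pf_equiv g hM hsub hinv, ih]

lemma pf_sameCycle_agree {M' : Finset (Sym2 (Fin n))}
    (hM' : ∀ v : Fin n, ∃! e, e ∈ M' ∧ v ∈ e)
    (hsub : ↑M ⊆ G.edgeSet) (hinv : M.image (Sym2.map g) = M)
    (hsub' : ↑M' ⊆ G.edgeSet) (hinv' : M'.image (Sym2.map g) = M')
    {x y : Fin n} (hxy : (pg g).SameCycle x y) (hx : pf hM x = pf hM' x) :
    pf hM y = pf hM' y := by
  obtain ⟨i, -, hi⟩ := hxy.exists_pow_eq'
  rw [← hi, pf_pow g hM hsub hinv, pf_pow g hM' hsub' hinv', hx]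

lemma sameCycle_pf (hsub : ↑M ⊆ G.edgeSet) (hinv : M.image (Sym2.map g) = M)
    {x y : Fin n} (hxy : (pg g).SameCycle x y) :
    (pg g).SameCycle (pf hM x) (pf hM y) := by
  obtain ⟨i, -, hi⟩ := hxy.exists_pow_eq'
  exact ⟨(i : ℤ), by rw [zpow_natCast, ← pf_pow g hM hsub hinv, hi]⟩

/-- representative (minimum) of the cycle of `v` -/
def rep (v : Fin n) : Fin n :=
  ((Finset.univ.filter (fun w => (pg g).SameCycle v w)).min'
    ⟨v, by simp [Equiv.Perm.SameCycle.refl]⟩)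

lemma sameCycle_rep (v : Fin n) : (pg g).SameCycle v (rep g v) := by
  have := Finset.min'_mem (Finset.univ.filter (fun w => (pg g).SameCycle v w))
    ⟨v, by simp [Equiv.Perm.SameCycle.refl]⟩
  simpa [rep] using (Finset.mem_filter.1 this).2

lemma rep_le {v w : Fin n} (h : (pg g).SameCycle v w) : rep g v ≤ w := by
  exact Finset.min'_le _ _ (Finset.mem_filter.2 ⟨Finset.mem_univ _, h⟩)

lemma rep_le_self (v : Fin n) : rep g v ≤ v := rep_le g (Equiv.Perm.SameCycle.refl _ _)

lemma rep_eq_of_sameCycle {v w : Fin n} (h : (pg g).SameCycle v w) : rep g v = rep g w := by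
  apply le_antisymm
  · exact rep_le g (h.trans (sameCycle_rep g w))
  · exact rep_le g (h.symm.trans (sameCycle_rep g v))

lemma rep_rep (v : Fin n) : rep g (rep g v) = rep g v :=
  (rep_eq_of_sameCycle g (sameCycle_rep g v)).symm

lemma sc_pow (v : Fin n) (i : ℕ) : (pg g).SameCycle v ((pg g ^ i) v) :=
  ⟨(i : ℤ), by rw [zpow_natCast]⟩

lemma ap2 (x : Fin n) : (pg g ^ 2) x = pg g (pg g x) := by
  rw [pow_succ, pow_one, Equiv.Perm.mul_apply]

lemma ap3 (x : Fin n) : (pg g ^ 3) x = pg g (pg g (pg g x)) := by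
  rw [pow_succ, Equiv.Perm.mul_apply, ap2]

lemma pow_mod_eq {m : ℕ} {v : Fin n} (hm : (pg g ^ m) v = v) (i : ℕ) :
    (pg g ^ i) v = (pg g ^ (i % m)) v := by
  have hq : ∀ q : ℕ, ((pg g ^ m) ^ q) v = v := by
    intro q
    induction q with
    | zero => rfl
    | succ q ih => rw [pow_succ', Equiv.Perm.mul_apply, ih, hm]
  conv_lhs => rw [← Nat.mod_add_div i m, pow_add, Equiv.Perm.mul_apply, pow_mul, hq]

lemma pf_of_two_cycle (hsub : ↑M ⊆ G.edgeSet)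
    {v : Fin n} (hsc : (pg g).SameCycle v (pf hM v)) (h2 : pg g (pg g v) = v) :
    pf hM v = pg g v := by
  obtain ⟨i, -, hi⟩ := hsc.exists_pow_eq'
  have h2' : (pg g ^ 2) v = v := by
    rw [pow_succ, pow_one, Equiv.Perm.mul_apply]; exact h2
  rw [pow_mod_eq g h2'] at hi
  have : i % 2 < 2 := Nat.mod_lt _ (by norm_num)
  interval_cases h : i % 2
  · simp at hi; exact absurd hi.symm (pf_ne hM hsub v)
  · rw [← hi, pow_one]

lemma no_three_cycle (hfix : ∀ v, pg g v ≠ v) (hsub : ↑M ⊆ G.edgeSet)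
    (hinv : M.image (Sym2.map g) = M)
    {v : Fin n} (hsc : (pg g).SameCycle v (pf hM v))
    (h2 : pg g (pg g v) ≠ v) : pg g (pg g (pg g v)) ≠ v := by
  intro h3
  obtain ⟨i, -, hi⟩ := hsc.exists_pow_eq'
  have h3' : (pg g ^ 3) v = v := by
    simp only [pow_succ, pow_zero, one_mul, Equiv.Perm.mul_apply]; exact h3
  rw [pow_mod_eq g h3'] at hi
  have hlt : i % 3 < 3 := Nat.mod_lt _ (by norm_num)
  interval_cases h : i % 3
  · simp at hi; exact absurd hi.symm (pf_ne hM hsub v)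
  · rw [pow_one] at hi
    have heq := pf_equiv g hM hsub hinv v
    have hv := pf_invol hM hsub v
    rw [← hi] at heq hv
    exact h2 (heq.symm.trans hv)
  · have heq := pf_pow g hM hsub hinv 2 v
    have hv := pf_invol hM hsub v
    rw [← hi] at heq hv
    have h4 : (pg g ^ 2) ((pg g ^ 2) v) = v := heq.symm.trans hv
    rw [ap2, ap2, h3] at h4
    exact hfix v h4

/-- "recorded" vertices: representatives of cycles that carry the encoding info -/
def recorded (v : Fin n) : Prop :=
  rep g v = v ∧ ¬(rep g (pf hM v) < v) ∧
    ¬(pg g (pg g v) = v ∧ rep g (pf hM v) = v)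

def recSet : Finset (Fin n) := Finset.univ.filter (recorded g hM)

def orbitU (v : Fin n) : Finset (Fin n) :=
  Finset.univ.filter
    (fun w => (pg g).SameCycle v w ∨ (pg g).SameCycle (pf hM v) w)

lemma disjoint_orbitU (hsub : ↑M ⊆ G.edgeSet) (hinv : M.image (Sym2.map g) = M)
    {v w : Fin n} (hv : recorded g hM v) (hw : recorded g hM w) (hvw : v ≠ w) :
    Disjoint (orbitU g hM v) (orbitU g hM w) := by
  rw [Finset.disjoint_left]
  intro x hx hx'
  rw [orbitU, Finset.mem_filter] at hx hx'
  apply hvw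
  have key : ∀ {a b : Fin n}, (pg g).SameCycle a b →
      rep g a = a → rep g b = b → a = b := by
    intro a b hab ha hb
    rw [← ha, ← hb, rep_eq_of_sameCycle g hab]
  rcases hx.2 with h1 | h1 <;> rcases hx'.2 with h2 | h2
  · exact key (h1.trans h2.symm) hv.1 hw.1
  · -- SameCycle v x, SameCycle (pf w) x
    have hc : (pg g).SameCycle (pf hM w) v := h2.trans h1.symm
    have hrv : rep g (pf hM w) = v := by
      rw [rep_eq_of_sameCycle g hc, hv.1]
    have hc2 : (pg g).SameCycle (pf hM v) w := by
      have := sameCycle_pf g hM hsub hinv hc.symm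
      rwa [pf_invol hM hsub w] at this
    have hrw : rep g (pf hM v) = w := by
      rw [rep_eq_of_sameCycle g hc2, hw.1]
    have h1' := hv.2.1
    have h2' := hw.2.1
    rw [hrw] at h1'
    rw [hrv] at h2'
    omega
  · -- symmetric
    have hc : (pg g).SameCycle (pf hM v) w := h1.trans h2.symm
    have hrw : rep g (pf hM v) = w := by
      rw [rep_eq_of_sameCycle g hc, hw.1]
    have hc2 : (pg g).SameCycle (pf hM w) v := by
      have := sameCycle_pf g hM hsub hinv hc.symm
      rwa [pf_invol hM hsub v] at this
    have hrv : rep g (pf hM w) = v := by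
      rw [rep_eq_of_sameCycle g hc2, hv.1]
    have h1' := hv.2.1
    have h2' := hw.2.1
    rw [hrw] at h1'
    rw [hrv] at h2'
    omega
  · have hc : (pg g).SameCycle (pf hM v) (pf hM w) := h1.trans h2.symm
    have := sameCycle_pf g hM hsub hinv hc
    rw [pf_invol hM hsub v, pf_invol hM hsub w] at this
    exact key this hv.1 hw.1

def Tset (v : Fin n) : Finset (Fin n) :=
  if (pg g).SameCycle v (pf hM v) then
    {v, pg g v, pg g (pg g v), pg g (pg g (pg g v))}
  else {v, pg g v, pf hM v, pg g (pf hM v)}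

lemma Tset_subset (v : Fin n) : Tset g hM v ⊆ orbitU g hM v := by
  intro x hx
  rw [orbitU, Finset.mem_filter]
  refine ⟨Finset.mem_univ _, ?_⟩
  rw [Tset] at hx
  split_ifs at hx with hsc
  · simp only [Finset.mem_insert, Finset.mem_singleton] at hx
    rcases hx with rfl | rfl | rfl | rfl
    · exact Or.inl (Equiv.Perm.SameCycle.refl _ _)
    · exact Or.inl (by simpa [pow_one] using sc_pow g v 1)
    · exact Or.inl (by simpa [ap2 g v] using sc_pow g v 2)
    · exact Or.inl (by simpa [ap3 g v] using sc_pow g v 3)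
  · simp only [Finset.mem_insert, Finset.mem_singleton] at hx
    rcases hx with rfl | rfl | rfl | rfl
    · exact Or.inl (Equiv.Perm.SameCycle.refl _ _)
    · exact Or.inl (by simpa [pow_one] using sc_pow g v 1)
    · exact Or.inr (Equiv.Perm.SameCycle.refl _ _)
    · exact Or.inr (by simpa [pow_one] using sc_pow g (pf hM v) 1)

lemma Tset_card (hfix : ∀ v, pg g v ≠ v) (hsub : ↑M ⊆ G.edgeSet)
    (hinv : M.image (Sym2.map g) = M) {v : Fin n} (hv : recorded g hM v) :
    (Tset g hM v).card = 4 := by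
  rw [Tset]
  split_ifs with hsc
  · have hrv : rep g (pf hM v) = v := by
      rw [rep_eq_of_sameCycle g hsc.symm, hv.1]
    have h2 : pg g (pg g v) ≠ v := fun h => hv.2.2 ⟨h, hrv⟩
    have h1 : pg g v ≠ v := hfix v
    have h3 : pg g (pg g (pg g v)) ≠ v := no_three_cycle g hM hfix hsub hinv hsc h2
    have e1 : v ≠ pg g v := h1.symm
    have e2 : v ≠ pg g (pg g v) := h2.symm
    have e3 : v ≠ pg g (pg g (pg g v)) := h3.symm
    have e4 : pg g v ≠ pg g (pg g v) := fun h => h1 ((pg g).injective h).symm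
    have e5 : pg g v ≠ pg g (pg g (pg g v)) := fun h => h2 ((pg g).injective h).symm
    have e6 : pg g (pg g v) ≠ pg g (pg g (pg g v)) := fun h =>
      h1 ((pg g).injective ((pg g).injective h)).symm
    rw [Finset.card_insert_of_notMem (by simp [e1, e2, e3]),
      Finset.card_insert_of_notMem (by simp [e4, e5]),
      Finset.card_insert_of_notMem (by simp [e6]), Finset.card_singleton]
  · have h1 : v ≠ pg g v := (hfix v).symm
    have h1' : pf hM v ≠ pg g (pf hM v) := (hfix _).symm
    have e1 : v ≠ pf hM v := fun h => hsc (h ▸ Equiv.Perm.SameCycle.refl _ _)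
    have hscp : (pg g).SameCycle (pf hM v) (pg g (pf hM v)) := by
      simpa [pow_one] using sc_pow g (pf hM v) 1
    have hscv : (pg g).SameCycle v (pg g v) := by
      simpa [pow_one] using sc_pow g v 1
    have e2 : v ≠ pg g (pf hM v) := fun h => by rw [← h] at hscp; exact hsc hscp.symm
    have e3 : pg g v ≠ pf hM v := fun h => hsc (hscv.trans (h ▸ Equiv.Perm.SameCycle.refl _ _))
    have e4 : pg g v ≠ pg g (pf hM v) := fun h => e1 ((pg g).injective h)
    rw [Finset.card_insert_of_notMem (by simp [h1, e1, e2]),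
      Finset.card_insert_of_notMem (by simp [e3, e4]),
      Finset.card_insert_of_notMem (by simp [h1']), Finset.card_singleton]

lemma card_recSet (hfix : ∀ v, pg g v ≠ v) (hsub : ↑M ⊆ G.edgeSet)
    (hinv : M.image (Sym2.map g) = M) :
    (recSet g hM).card * 4 ≤ n := by
  have hdisj : ∀ x ∈ recSet g hM, ∀ y ∈ recSet g hM, x ≠ y →
      Disjoint (Tset g hM x) (Tset g hM y) := by
    intro x hx y hy hxy
    exact Finset.disjoint_of_subset_left (Tset_subset g hM x)
      (Finset.disjoint_of_subset_right (Tset_subset g hM y)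
        (disjoint_orbitU g hM hsub hinv
          (Finset.mem_filter.1 hx).2 (Finset.mem_filter.1 hy).2 hxy))
  have e1 : ∑ v ∈ recSet g hM, (Tset g hM v).card = ∑ _v ∈ recSet g hM, 4 :=
    Finset.sum_congr rfl
      (fun v hv => Tset_card g hM hfix hsub hinv (Finset.mem_filter.1 hv).2)
  have e2 : ∑ _v ∈ recSet g hM, (4:ℕ) = (recSet g hM).card * 4 := by
    rw [Finset.sum_const, smul_eq_mul]
  rw [← e2, ← e1, ← Finset.card_biUnion hdisj]
  simpa using Finset.card_le_univ ((recSet g hM).biUnion (Tset g hM))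

variable {M' : Finset (Sym2 (Fin n))} (hM' : ∀ v : Fin n, ∃! e, e ∈ M' ∧ v ∈ e)

lemma caseA (hsub : ↑M ⊆ G.edgeSet) (hinv : M.image (Sym2.map g) = M)
    (hsub' : ↑M' ⊆ G.edgeSet) (hinv' : M'.image (Sym2.map g) = M')
    (hagree : ∀ v ∈ recSet g hM, pf hM v = pf hM' v)
    {r : Fin n} (hrr : rep g r = r) (hA : rep g (pf hM r) < r) :
    pf hM' r = pf hM r := by
  set p := pf hM r with hp
  set j := rep g p with hj
  have hscjp : (pg g).SameCycle j p := (sameCycle_rep g p).symm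
  have hpfp : pf hM p = r := pf_invol hM hsub r
  have hscpfj : (pg g).SameCycle (pf hM j) r := by
    have := sameCycle_pf g hM hsub hinv hscjp
    rwa [hpfp] at this
  have hrepj : rep g (pf hM j) = r := by
    rw [rep_eq_of_sameCycle g hscpfj]; exact hrr
  have hrecj : recorded g hM j := by
    refine ⟨rep_rep g p, ?_, ?_⟩
    · rw [hrepj]; exact fun h => absurd hA (lt_asymm h)
    · rintro ⟨-, hh⟩
      rw [hrepj] at hh
      exact absurd hh.symm (ne_of_lt hA)
  have hagj : pf hM j = pf hM' j :=
    hagree j (Finset.mem_filter.2 ⟨Finset.mem_univ _, hrecj⟩)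
  have hagp : pf hM p = pf hM' p :=
    pf_sameCycle_agree g hM hM' hsub hinv hsub' hinv' hscjp hagj
  have hpfp' : pf hM' p = r := by rw [← hagp]; exact hpfp
  have := pf_invol hM' hsub' p
  rw [hpfp'] at this
  exact this

lemma pf_eq_of_agree (hfix : ∀ v, pg g v ≠ v)
    (hsub : ↑M ⊆ G.edgeSet) (hinv : M.image (Sym2.map g) = M)
    (hsub' : ↑M' ⊆ G.edgeSet) (hinv' : M'.image (Sym2.map g) = M')
    (hS : recSet g hM = recSet g hM')
    (hagree : ∀ v ∈ recSet g hM, pf hM v = pf hM' v) (v : Fin n) :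
    pf hM v = pf hM' v := by
  have hagree' : ∀ v ∈ recSet g hM', pf hM' v = pf hM v := by
    intro v hv
    rw [← hS] at hv
    exact (hagree v hv).symm
  suffices h : pf hM (rep g v) = pf hM' (rep g v) by
    exact pf_sameCycle_agree g hM hM' hsub hinv hsub' hinv' (sameCycle_rep g v).symm h
  set r := rep g v with hrdef
  have hrr : rep g r = r := rep_rep g v
  by_cases hrS : r ∈ recSet g hM
  · exact hagree r hrS
  · have hnrec : ¬ recorded g hM r := fun h => hrS (Finset.mem_filter.2 ⟨Finset.mem_univ _, h⟩)
    have hnrec' : ¬ recorded g hM' r := by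
      intro h
      exact hrS (hS ▸ Finset.mem_filter.2 ⟨Finset.mem_univ _, h⟩)
    by_cases hA : rep g (pf hM r) < r
    · exact (caseA g hM hM' hsub hinv hsub' hinv' hagree hrr hA).symm
    · by_cases hA' : rep g (pf hM' r) < r
      · exact caseA g hM' hM hsub' hinv' hsub hinv hagree' hrr hA'
      · have hB : pg g (pg g r) = r ∧ rep g (pf hM r) = r := by
          by_contra hc
          exact hnrec ⟨hrr, hA, hc⟩
        have hB' : pg g (pg g r) = r ∧ rep g (pf hM' r) = r := by
          by_contra hc
          exact hnrec' ⟨hrr, hA', hc⟩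
        have hsc : (pg g).SameCycle r (pf hM r) := by
          have := sameCycle_rep g (pf hM r)
          rw [hB.2] at this
          exact this.symm
        have hsc' : (pg g).SameCycle r (pf hM' r) := by
          have := sameCycle_rep g (pf hM' r)
          rw [hB'.2] at this
          exact this.symm
        rw [pf_of_two_cycle g hM hsub hsc hB.1, pf_of_two_cycle g hM' hsub' hsc' hB'.1]

lemma factor_eq (hfix : ∀ v, pg g v ≠ v)
    (hsub : ↑M ⊆ G.edgeSet) (hinv : M.image (Sym2.map g) = M)
    (hsub' : ↑M' ⊆ G.edgeSet) (hinv' : M'.image (Sym2.map g) = M')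
    (hS : recSet g hM = recSet g hM')
    (hagree : ∀ v ∈ recSet g hM, pf hM v = pf hM' v) : M = M' := by
  have hpf := pf_eq_of_agree g hM hM' hfix hsub hinv hsub' hinv' hS hagree
  ext e
  induction e using Sym2.ind with
  | _ a b =>
    constructor
    · intro h
      rw [pf_unique hM h (Sym2.mem_mk_left a b), hpf a]
      exact pf_spec hM' a
    · intro h
      rw [pf_unique hM' h (Sym2.mem_mk_left a b), ← hpf a]
      exact pf_spec hM a

section encode

variable {k : ℕ} [DecidableRel G.Adj]

def idx (hreg : G.IsRegularOfDegree k) (v u : Fin n) (h : G.Adj v u) : Fin k :=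
  ((G.neighborFinset v).orderIsoOfFin (hreg v)).symm
    ⟨u, (SimpleGraph.mem_neighborFinset G v u).2 h⟩

lemma idx_inj (hreg : G.IsRegularOfDegree k) {v u u' : Fin n} {h : G.Adj v u}
    {h' : G.Adj v u'} (he : idx hreg v u h = idx hreg v u' h') : u = u' := by
  have := congrArg ((G.neighborFinset v).orderIsoOfFin (hreg v)) he
  simp only [idx, OrderIso.apply_symm_apply] at this
  exact Subtype.ext_iff.1 this

def encode (q : ℕ) (hk : 0 < k) (S : Finset (Fin n)) (f : Fin n → Fin k) :
    Fin q → Fin k := fun j =>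
  if h : (j : ℕ) < (S.sort (· ≤ ·)).length then f ((S.sort (· ≤ ·))[(j : ℕ)]'h)
  else ⟨0, hk⟩

lemma encode_agree {q : ℕ} {hk : 0 < k} {S : Finset (Fin n)} {f f' : Fin n → Fin k}
    (hq : S.card ≤ q) (henc : encode q hk S f = encode q hk S f') :
    ∀ v ∈ S, f v = f' v := by
  intro v hv
  have hvl : v ∈ S.sort (· ≤ ·) := (Finset.mem_sort _).2 hv
  have hil : List.idxOf v (S.sort (· ≤ ·)) < (S.sort (· ≤ ·)).length :=
    List.idxOf_lt_length_iff.2 hvl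
  have hiq : List.idxOf v (S.sort (· ≤ ·)) < q := by
    rw [Finset.length_sort] at hil
    exact lt_of_lt_of_le hil hq
  have := congrFun henc ⟨List.idxOf v (S.sort (· ≤ ·)), hiq⟩
  simp only [encode] at this
  rw [dif_pos hil, dif_pos hil, List.getElem_idxOf] at this
  exact this

end encode

lemma analytic (n k q : ℕ) (hk : 1 ≤ k) (hq : (q : ℝ) ≤ (n : ℝ) / 4) :
    ((2 : ℝ) ^ n * (k : ℝ) ^ q) ≤ (8 * Real.exp 1 * (k : ℝ)) ^ ((n : ℝ) / 4) := by
  have hx : (0 : ℝ) ≤ (n : ℝ) / 4 := by positivity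
  have h16 : (16 : ℝ) ≤ 8 * Real.exp 1 := by
    nlinarith [Real.add_one_le_exp (1 : ℝ)]
  have h2n : (2 : ℝ) ^ n ≤ (8 * Real.exp 1) ^ ((n : ℝ) / 4) := by
    have e : (16 : ℝ) ^ ((n : ℝ) / 4) = (2 : ℝ) ^ (n : ℕ) := by
      have h4 : (16 : ℝ) = (2 : ℝ) ^ ((4 : ℕ) : ℝ) := by
        rw [Real.rpow_natCast]; norm_num
      rw [h4, ← Real.rpow_mul (by norm_num : (0 : ℝ) ≤ 2),
        show ((4 : ℕ) : ℝ) * ((n : ℝ) / 4) = (n : ℝ) by push_cast; ring,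
        Real.rpow_natCast]
    rw [← e]
    exact Real.rpow_le_rpow (by norm_num) h16 hx
  have hkq : (k : ℝ) ^ q ≤ (k : ℝ) ^ ((n : ℝ) / 4) := by
    rw [← Real.rpow_natCast (k : ℝ) q]
    exact Real.rpow_le_rpow_of_exponent_le (by exact_mod_cast hk) hq
  calc (2 : ℝ) ^ n * (k : ℝ) ^ q
      ≤ (8 * Real.exp 1) ^ ((n : ℝ) / 4) * (k : ℝ) ^ ((n : ℝ) / 4) :=
        mul_le_mul h2n hkq (by positivity) (by positivity)
    _ = (8 * Real.exp 1 * (k : ℝ)) ^ ((n : ℝ) / 4) :=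
        (Real.mul_rpow (by positivity) (by positivity)).symm

end
end OFaux

open OFaux in
/-- If `Γ` is a `k`-regular graph on `n` vertices and `g` is an automorphism
of `Γ` with no fixed vertices, then the number of 1-factors of `Γ` fixed
setwise by `g` is at most `(8ek) ^ (n/4)`. -/
theorem count_one_factors_fixed_by_fpf_auto (n k : ℕ) (G : SimpleGraph (Fin n))
    [DecidableRel G.Adj] (hreg : G.IsRegularOfDegree k)
    (g : G ≃g G) (hfix : ∀ v, g v ≠ v) :
    (Nat.card {M : Finset (Sym2 (Fin n)) //
        IsOneFactorOf n G M ∧ M.image (Sym2.map g) = M} : ℝ) ≤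
      (8 * Real.exp 1 * (k : ℝ)) ^ ((n : ℝ) / 4) := by
  classical
  rcases Nat.eq_zero_or_pos n with hn | hn
  · subst hn
    have hemp : ∀ (N : Finset (Sym2 (Fin 0))), N = ∅ := by
      intro N
      rw [Finset.eq_empty_iff_forall_notMem]
      intro e
      induction e using Sym2.ind with
      | _ a b => exact a.elim0
    have hone : Nat.card {M : Finset (Sym2 (Fin 0)) //
        IsOneFactorOf 0 G M ∧ M.image (Sym2.map g) = M} ≤ 1 := by
      have hinj : Function.Injective
          (fun _ : {M : Finset (Sym2 (Fin 0)) //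
            IsOneFactorOf 0 G M ∧ M.image (Sym2.map g) = M} => (() : Unit)) := by
        intro a b _
        apply Subtype.ext
        rw [hemp a.1, hemp b.1]
      simpa using Nat.card_le_card_of_injective _ hinj
    have : ((0 : ℕ) : ℝ) / 4 = 0 := by norm_num
    rw [this, Real.rpow_zero]
    exact_mod_cast hone
  rcases Nat.eq_zero_or_pos k with hk | hk
  · subst hk
    have : IsEmpty {M : Finset (Sym2 (Fin n)) //
        IsOneFactorOf n G M ∧ M.image (Sym2.map g) = M} := by
      constructor
      rintro ⟨M, ⟨⟨hsubM, hMu⟩, hinvM⟩⟩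
      obtain ⟨e, ⟨heM, hve⟩, -⟩ := hMu ⟨0, hn⟩
      have hadj : ∃ w, G.Adj ⟨0, hn⟩ w := by
        revert heM hve
        induction e using Sym2.ind with
        | _ a b =>
          intro heM hve
          have hab : G.Adj a b := hsubM heM
          rcases Sym2.mem_iff.1 hve with rfl | rfl
          · exact ⟨b, hab⟩
          · exact ⟨a, hab.symm⟩
      obtain ⟨w, hw⟩ := hadj
      have hmem : w ∈ G.neighborFinset ⟨0, hn⟩ :=
        (SimpleGraph.mem_neighborFinset _ _ _).2 hw
      have hpos := Finset.card_pos.2 ⟨w, hmem⟩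
      have h0 := hreg ⟨0, hn⟩
      rw [SimpleGraph.card_neighborFinset_eq_degree, h0] at hpos
      exact absurd hpos (lt_irrefl 0)
    rw [Nat.card_of_isEmpty]
    push_cast
    exact Real.rpow_nonneg (by positivity) _
  -- main case
  have hfix' : ∀ v, pg g v ≠ v := hfix
  set q := n / 4 with hqdef
  set Φ : {M : Finset (Sym2 (Fin n)) //
      IsOneFactorOf n G M ∧ M.image (Sym2.map g) = M} →
      Finset (Fin n) × (Fin q → Fin k) := fun x =>
    (recSet g x.2.1.2, encode q hk (recSet g x.2.1.2)
      (fun v => if h : G.Adj v (pf x.2.1.2 v) then idx hreg v _ h else ⟨0, hk⟩))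
    with hPhi
  have hinj : Function.Injective Φ := by
    rintro ⟨M, ⟨⟨hsubM, hMu⟩, hinvM⟩⟩ ⟨M', ⟨⟨hsubM', hMu'⟩, hinvM'⟩⟩ hMM
    obtain ⟨h1, h2⟩ := Prod.ext_iff.1 hMM
    simp only [hPhi] at h1 h2
    apply Subtype.ext
    simp only
    refine factor_eq g hMu hMu' hfix' hsubM hinvM hsubM' hinvM' h1 ?_
    intro v hv
    rw [← h1] at h2
    have hq4 : (recSet g hMu).card ≤ q := by
      have := card_recSet g hMu hfix' hsubM hinvM
      omega
    have := encode_agree hq4 h2 v hv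
    rw [dif_pos (pf_adj hMu hsubM v), dif_pos (pf_adj hMu' hsubM' v)] at this
    exact idx_inj hreg this
  have hcard := Nat.card_le_card_of_injective Φ hinj
  have hcodcard : Nat.card (Finset (Fin n) × (Fin q → Fin k)) = 2 ^ n * k ^ q := by
    rw [Nat.card_eq_fintype_card, Fintype.card_prod, Fintype.card_finset,
      Fintype.card_fun]
    simp
  rw [hcodcard] at hcard
  have hqle : (q : ℝ) ≤ (n : ℝ) / 4 := by
    rw [hqdef]
    exact_mod_cast Nat.cast_div_le
  calc (Nat.card {M : Finset (Sym2 (Fin n)) //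
        IsOneFactorOf n G M ∧ M.image (Sym2.map g) = M} : ℝ)
      ≤ ((2 ^ n * k ^ q : ℕ) : ℝ) := by exact_mod_cast hcard
    _ = (2 : ℝ) ^ n * (k : ℝ) ^ q := by push_cast; ring
    _ ≤ (8 * Real.exp 1 * (k : ℝ)) ^ ((n : ℝ) / 4) := analytic n k q hk hqle
end

section
/- Let P be an edge-parallelism of the complete graph on an n-element set X (n even) and let g be a non-identity automorphism of P fixing exactly r points with r > 0. Then r ≤ n/2, and g fixes setwise exactly r − 1 of the n − 1 parallel classes of P. -/
/-!
Fix a point `x`. Every parallel class contains exactly one pair `{x, y}`, and every `y ≠ x` lies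
in exactly one such pair, so the classes correspond to the partners `y ≠ x`; hence there are
`n - 1` of them. If `g x = x`, the class through `{x, y}` is `g`-invariant exactly when `g y = y`
(an invariant class maps its unique pair through `x` to itself), which gives `r - 1` invariant classes. Applying the same correspondence at a point `z` moved
by `g`, the classes through `{z, y}` with `y` fixed are pairwise distinct and not invariant, so
`r ≤ (n - 1) - (r - 1)`.
-/

/-- A perfect matching of the `n`-element set `Fin n`: a collection of
2-element subsets such that every point lies in exactly one of them. -/
def IsPerfectMatchingOn (n : ℕ) (M : Finset (Finset (Fin n))) : Prop :=
  (∀ e ∈ M, e.card = 2) ∧ ∀ x : Fin n, ∃! e, e ∈ M ∧ x ∈ e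

/-- An edge-parallelism (1-factorisation) of the complete graph on `Fin n`:
a collection of parallel classes, each a perfect matching, such that every
2-element subset of `Fin n` lies in exactly one class. -/
def IsOneFactorisation (n : ℕ) (P : Finset (Finset (Finset (Fin n)))) : Prop :=
  (∀ M ∈ P, IsPerfectMatchingOn n M) ∧
  ∀ e : Finset (Fin n), e.card = 2 → ∃! M, M ∈ P ∧ e ∈ M

/-- `g` is an automorphism of the edge-parallelism `P`: the image of every
parallel class is a parallel class. -/
def IsOneFactorisationAuto (n : ℕ) (P : Finset (Finset (Finset (Fin n))))
    (g : Equiv.Perm (Fin n)) : Prop :=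
  ∀ M ∈ P, M.image (Finset.image g) ∈ P

open Finset

namespace IsPerfectMatchingOn

variable {n : ℕ} {M : Finset (Finset (Fin n))}

theorem eq_of_mem_of_mem (hM : IsPerfectMatchingOn n M) {e f : Finset (Fin n)} {x : Fin n}
    (he : e ∈ M) (hf : f ∈ M) (hxe : x ∈ e) (hxf : x ∈ f) : e = f :=
  (hM.2 x).unique ⟨he, hxe⟩ ⟨hf, hxf⟩

theorem ne_of_pair_mem (hM : IsPerfectMatchingOn n M) {x y : Fin n} (h : {x, y} ∈ M) :
    x ≠ y := by
  rintro rfl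
  simpa using hM.1 _ h

theorem exists_pair_mem (hM : IsPerfectMatchingOn n M) (x : Fin n) : ∃ y, {x, y} ∈ M := by
  obtain ⟨e, ⟨he, hxe⟩, -⟩ := hM.2 x
  obtain ⟨a, b, -, rfl⟩ := card_eq_two.mp (hM.1 e he)
  rcases mem_insert.mp hxe with rfl | hxb
  · exact ⟨b, he⟩
  · obtain rfl := mem_singleton.mp hxb
    rw [pair_comm] at he
    exact ⟨a, he⟩

theorem apply_eq_self_of_pair_mem (hM : IsPerfectMatchingOn n M) {g : Equiv.Perm (Fin n)}
    (hMg : M.image (image g) = M) {x y : Fin n} (hxy : {x, y} ∈ M) (hx : g x = x) :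
    g y = y := by
  have himg : ({x, y} : Finset (Fin n)).image g ∈ M := hMg ▸ mem_image_of_mem _ hxy
  rw [image_insert, image_singleton, hx] at himg
  have hgy : g y ∈ ({x, y} : Finset (Fin n)) :=
    hM.eq_of_mem_of_mem himg hxy (mem_insert_self _ _) (mem_insert_self _ _) ▸
      mem_insert_of_mem (mem_singleton_self _)
  rcases mem_insert.mp hgy with hyx | hyy
  · exact absurd (g.injective (hyx.trans hx.symm)).symm (hM.ne_of_pair_mem hxy)
  · exact mem_singleton.mp hyy

end IsPerfectMatchingOn

namespace IsOneFactorisation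

variable {n : ℕ} {P : Finset (Finset (Finset (Fin n)))}

theorem eq_of_pair_mem (hP : IsOneFactorisation n P) {x y : Fin n}
    {M M' : Finset (Finset (Fin n))} (hM : M ∈ P) (hM' : M' ∈ P) (h : {x, y} ∈ M)
    (h' : {x, y} ∈ M') : M = M' :=
  (hP.2 _ ((hP.1 M hM).1 _ h)).unique ⟨hM, h⟩ ⟨hM', h'⟩

theorem exists_pair_mem_iff (hP : IsOneFactorisation n P) {x y : Fin n} :
    (∃ M ∈ P, {x, y} ∈ M) ↔ x ≠ y :=
  ⟨fun ⟨M, hM, h⟩ => (hP.1 M hM).ne_of_pair_mem h,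
    fun hxy => (hP.2 _ (card_pair hxy)).exists⟩

theorem card_filter_eq_card_filter_pair_mem (hP : IsOneFactorisation n P) (x : Fin n)
    (p : Finset (Finset (Fin n)) → Prop) [DecidablePred p] :
    #(P.filter p) = #(univ.filter fun y => ∃ M ∈ P, {x, y} ∈ M ∧ p M) := by
  symm
  refine card_bij (fun y hy => (mem_filter.mp hy).2.choose) (fun y hy => ?_) ?_ ?_
  · obtain ⟨hM, -, hp⟩ := (mem_filter.mp hy).2.choose_spec
    exact mem_filter.mpr ⟨hM, hp⟩
  · intro y hy y' hy' hMM'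
    obtain ⟨hM, hxy, -⟩ := (mem_filter.mp hy).2.choose_spec
    obtain ⟨-, hxy', -⟩ := (mem_filter.mp hy').2.choose_spec
    rw [← hMM'] at hxy'
    have hy_mem : y ∈ ({x, y'} : Finset (Fin n)) :=
      (hP.1 _ hM).eq_of_mem_of_mem hxy hxy' (mem_insert_self x _) (mem_insert_self x _) ▸
        mem_insert_of_mem (mem_singleton_self y)
    rcases mem_insert.mp hy_mem with hyx | hyy'
    · exact absurd hyx.symm ((hP.1 _ hM).ne_of_pair_mem hxy)
    · exact mem_singleton.mp hyy'
  · intro M hM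
    obtain ⟨hMP, hp⟩ := mem_filter.mp hM
    obtain ⟨y, hxy⟩ := (hP.1 M hMP).exists_pair_mem x
    have hy : y ∈ univ.filter fun y => ∃ M ∈ P, {x, y} ∈ M ∧ p M :=
      mem_filter.mpr ⟨mem_univ y, M, hMP, hxy, hp⟩
    obtain ⟨hM', hxy', -⟩ := (mem_filter.mp hy).2.choose_spec
    exact ⟨y, hy, hP.eq_of_pair_mem hM' hMP hxy' hxy⟩

theorem card_eq_sub_one (hP : IsOneFactorisation n P) (x : Fin n) : #P = n - 1 := by
  simpa [hP.exists_pair_mem_iff, filter_ne] using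
    hP.card_filter_eq_card_filter_pair_mem x (fun _ => True)

theorem image_eq_iff_apply_eq_self (hP : IsOneFactorisation n P) {g : Equiv.Perm (Fin n)}
    (hg : IsOneFactorisationAuto n P g) {M : Finset (Finset (Fin n))} (hM : M ∈ P)
    {x y : Fin n} (hxy : {x, y} ∈ M) (hx : g x = x) :
    M.image (image g) = M ↔ g y = y := by
  refine ⟨fun hMg => (hP.1 M hM).apply_eq_self_of_pair_mem hMg hxy hx, fun hy => ?_⟩
  have himg : ({x, y} : Finset (Fin n)).image g ∈ M.image (image g) := mem_image_of_mem _ hxy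
  rw [image_insert, image_singleton, hx, hy] at himg
  exact hP.eq_of_pair_mem (hg M hM) hM himg hxy

theorem filter_pair_mem_invariant_eq_erase (hP : IsOneFactorisation n P)
    {g : Equiv.Perm (Fin n)} (hg : IsOneFactorisationAuto n P g) {x : Fin n} (hx : g x = x) :
    univ.filter (fun y => ∃ M ∈ P, {x, y} ∈ M ∧ M.image (image g) = M) =
      (univ.filter fun y => g y = y).erase x := by
  ext y
  simp only [mem_filter, mem_univ, true_and, mem_erase]
  constructor
  · rintro ⟨M, hM, hxy, hMg⟩
    exact ⟨((hP.1 M hM).ne_of_pair_mem hxy).symm,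
      (hP.image_eq_iff_apply_eq_self hg hM hxy hx).mp hMg⟩
  · rintro ⟨hyx, hy⟩
    obtain ⟨M, hM, hxy⟩ := hP.exists_pair_mem_iff.mpr (Ne.symm hyx)
    exact ⟨M, hM, hxy, (hP.image_eq_iff_apply_eq_self hg hM hxy hx).mpr hy⟩

theorem filter_fixed_subset_filter_pair_mem_not_invariant (hP : IsOneFactorisation n P)
    {g : Equiv.Perm (Fin n)} (hg : IsOneFactorisationAuto n P g) {z : Fin n} (hz : g z ≠ z) :
    univ.filter (fun y => g y = y) ⊆
      univ.filter fun y => ∃ M ∈ P, {z, y} ∈ M ∧ ¬M.image (image g) = M := by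
  intro y hy
  obtain ⟨-, hy⟩ := mem_filter.mp hy
  obtain ⟨M, hM, hzy⟩ := hP.exists_pair_mem_iff.mpr fun hzy : z = y => hz (hzy ▸ hy)
  refine mem_filter.mpr ⟨mem_univ y, M, hM, hzy, fun hMg => hz ?_⟩
  rw [pair_comm] at hzy
  exact (hP.image_eq_iff_apply_eq_self hg hM hzy hy).mp hMg

end IsOneFactorisation

theorem one_factorisation_auto_with_fixed_points_general (n : ℕ)
    (P : Finset (Finset (Finset (Fin n)))) (hP : IsOneFactorisation n P)
    (g : Equiv.Perm (Fin n)) (hg : IsOneFactorisationAuto n P g) (hg1 : g ≠ 1)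
    (r : ℕ) (hr : (Finset.univ.filter fun x => g x = x).card = r) (hr0 : 0 < r) :
    2 * r ≤ n ∧
      (P.filter fun M => M.image (Finset.image g) = M).card = r - 1 := by
  obtain ⟨x, hx_mem⟩ := card_pos.mp (hr ▸ hr0)
  have hx : g x = x := (mem_filter.mp hx_mem).2
  obtain ⟨z, hz⟩ : ∃ z, g z ≠ z := by
    by_contra! h
    exact hg1 (Equiv.ext h)
  have hinvariant : #(P.filter fun M => M.image (image g) = M) = r - 1 := by
    rw [hP.card_filter_eq_card_filter_pair_mem x, hP.filter_pair_mem_invariant_eq_erase hg hx,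
      card_erase_of_mem hx_mem, hr]
  have hnot_invariant : r ≤ #(P.filter fun M => ¬M.image (image g) = M) := by
    rw [hP.card_filter_eq_card_filter_pair_mem z, ← hr]
    exact card_le_card (hP.filter_fixed_subset_filter_pair_mem_not_invariant hg hz)
  have hP_card := hP.card_eq_sub_one x
  have hsplit := card_filter_add_card_filter_not (s := P) fun M => M.image (image g) = M
  exact ⟨by omega, hinvariant⟩

/-- If `g` is a non-identity automorphism of an edge-parallelism of the
complete graph on `n` points (`n` even) fixing exactly `r > 0` points, then
`r ≤ n / 2` and `g` fixes setwise exactly `r - 1` of the parallel classes. -/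
theorem one_factorisation_auto_with_fixed_points (n : ℕ) (hn : Even n)
    (P : Finset (Finset (Finset (Fin n)))) (hP : IsOneFactorisation n P)
    (g : Equiv.Perm (Fin n)) (hg : IsOneFactorisationAuto n P g) (hg1 : g ≠ 1)
    (r : ℕ) (hr : (Finset.univ.filter fun x => g x = x).card = r) (hr0 : 0 < r) :
    2 * r ≤ n ∧
      (P.filter fun M => M.image (Finset.image g) = M).card = r - 1 :=
  one_factorisation_auto_with_fixed_points_general n P hP g hg hg1 r hr hr0
end
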